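/- arXiv:2507.21574 — 7 statements merged into one kernel-verified Lean document; each statement's English description precedes it below -/
import Mathlib

section
/- Let Ξ ⊂ ℝ^k be compact, P a Borel probability measure on Ξ, C : Ξ → ℝ continuous, and β ∈ (0,1). Assume the cumulative distribution function Ψ(t) = P{ξ ∈ Ξ : C(ξ) ≤ t} is continuous on ℝ. Then CVaR_β(C) = inf_{α ∈ ℝ} ( α + (1/(1−β)) ∫_Ξ [C(ξ) − α]_+ dP(ξ) ), and the infimum is attained at α = VaR_β(C). -/
open MeasureTheory

noncomputable section

abbrev Euc (k : ℕ) := EuclideanSpace ℝ (Fin k)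

/-- The cumulative distribution function `Ψ(t) = P{ξ ∈ Ξ : C ξ ≤ t}`. -/
def cdf {k : ℕ} (Ξ : Set (Euc k)) (P : Measure (Euc k)) (C : Euc k → ℝ) (t : ℝ) : ℝ :=
  (P {ξ | ξ ∈ Ξ ∧ C ξ ≤ t}).toReal

/-- The `β`-value at risk: `VaR_β(C) = inf {t : Ψ(t) ≥ β}`. -/
def VaR {k : ℕ} (Ξ : Set (Euc k)) (P : Measure (Euc k)) (C : Euc k → ℝ) (β : ℝ) : ℝ :=
  sInf {t : ℝ | β ≤ cdf Ξ P C t}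

/-- The `β`-conditional value at risk. -/
def CVaR {k : ℕ} (Ξ : Set (Euc k)) (P : Measure (Euc k)) (C : Euc k → ℝ) (β : ℝ) : ℝ :=
  (1 / (1 - β)) * ∫ ξ in {ξ | ξ ∈ Ξ ∧ VaR Ξ P C β ≤ C ξ}, C ξ ∂P

theorem cvar_inf_representation {k : ℕ} (Ξ : Set (Euc k)) (hΞ : IsCompact Ξ)
    (P : Measure (Euc k)) [IsProbabilityMeasure P] (hP : P Ξᶜ = 0)
    (C : Euc k → ℝ) (hC : ContinuousOn C Ξ)
    (β : ℝ) (hβ : β ∈ Set.Ioo (0 : ℝ) 1)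
    (hΨ : Continuous (cdf Ξ P C)) :
    CVaR Ξ P C β
      = (⨅ α : ℝ, (α + (1 / (1 - β)) * ∫ ξ in Ξ, max (C ξ - α) 0 ∂P)) ∧
    (VaR Ξ P C β + (1 / (1 - β)) * ∫ ξ in Ξ, max (C ξ - VaR Ξ P C β) 0 ∂P)
      = (⨅ α : ℝ, (α + (1 / (1 - β)) * ∫ ξ in Ξ, max (C ξ - α) 0 ∂P)) := by
  obtain ⟨hβ0, hβ1⟩ := hβ
  have h1β : (0:ℝ) < 1 - β := by linarith
  have h1β' : (1:ℝ) - β ≠ 0 := ne_of_gt h1β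
  set Ψ : ℝ → ℝ := cdf Ξ P C with hΨdef
  set v : ℝ := VaR Ξ P C β with hvdef
  have hΞm : MeasurableSet Ξ := hΞ.isClosed.measurableSet
  have hPΞ : P Ξ = 1 := by
    have h := measure_add_measure_compl (μ := P) hΞm
    rw [hP, add_zero] at h
    simpa using h
  have hΞne : Ξ.Nonempty := by
    rcases Set.eq_empty_or_nonempty Ξ with h | h
    · exfalso; rw [h] at hPΞ; simp at hPΞ
    · exact h
  obtain ⟨xM, hxM, hMmax⟩ := hΞ.exists_isMaxOn hΞne hC
  obtain ⟨xm, hxm, hmmin⟩ := hΞ.exists_isMinOn hΞne hC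
  -- S and VaR basics
  set S : Set ℝ := {t : ℝ | β ≤ Ψ t} with hSdef
  have hΨM : Ψ (C xM) = 1 := by
    have : {ξ | ξ ∈ Ξ ∧ C ξ ≤ C xM} = Ξ := by
      ext x; simp only [Set.mem_setOf_eq]
      exact ⟨fun h => h.1, fun h => ⟨h, hMmax h⟩⟩
    simp [hΨdef, cdf, this, hPΞ]
  have hSne : S.Nonempty := ⟨C xM, by simp only [hSdef, Set.mem_setOf_eq, hΨM]; linarith⟩
  have hSbdd : BddBelow S := by
    refine ⟨C xm, fun t ht => ?_⟩
    have hΨt : 0 < Ψ t := lt_of_lt_of_le hβ0 ht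
    have hne : P {ξ | ξ ∈ Ξ ∧ C ξ ≤ t} ≠ 0 := by
      intro h; rw [hΨdef] at hΨt; unfold cdf at hΨt; rw [h] at hΨt; simp at hΨt
    obtain ⟨x, hxΞ, hxt⟩ := nonempty_of_measure_ne_zero hne
    exact le_trans (hmmin hxΞ) hxt
  have hSclosed : IsClosed S := isClosed_le continuous_const hΨ
  have hvS : v ∈ S := by
    rw [hvdef]
    exact hSclosed.csInf_mem hSne hSbdd
  have hβΨv : β ≤ Ψ v := hvS
  have hΨvβ : Ψ v ≤ β := by
    have hlt : ∀ t ∈ Set.Iio v, Ψ t ≤ β := by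
      intro t ht
      by_contra h
      push_neg at h
      have : v ≤ t := csInf_le hSbdd (le_of_lt h)
      exact absurd ht (by simp [not_lt.mpr this])
    have htend : Filter.Tendsto Ψ (nhdsWithin v (Set.Iio v)) (nhds (Ψ v)) :=
      (hΨ.tendsto v).mono_left nhdsWithin_le_nhds
    exact le_of_tendsto htend (eventually_nhdsWithin_of_forall hlt)
  have hΨv : Ψ v = β := le_antisymm hΨvβ hβΨv
  -- the sets A and B
  set A : Set (Euc k) := Ξ ∩ {x | v ≤ C x} with hAdef
  set B : Set (Euc k) := Ξ ∩ {x | C x < v} with hBdef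
  have hAclosed : IsClosed A := hC.preimage_isClosed_of_isClosed hΞ.isClosed isClosed_Ici
  have hAm : MeasurableSet A := hAclosed.measurableSet
  have hBeq : B = Ξ \ A := by
    ext x
    simp only [hBdef, hAdef, Set.mem_inter_iff, Set.mem_setOf_eq, Set.mem_diff]
    constructor
    · rintro ⟨h1, h2⟩; exact ⟨h1, fun h => absurd h2 (not_lt.mpr h.2)⟩
    · rintro ⟨h1, h2⟩; exact ⟨h1, lt_of_not_ge fun h => h2 ⟨h1, h⟩⟩
  have hBm : MeasurableSet B := by rw [hBeq]; exact hΞm.diff hAm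
  have hABdisj : Disjoint A B := by
    rw [hBeq]; exact Set.disjoint_sdiff_right
  have hABunion : A ∪ B = Ξ := by
    rw [hBeq]
    exact Set.union_diff_cancel Set.inter_subset_left
  -- measure of B is β
  have hPB : (P B).toReal = β := by
    have hle : (P B).toReal ≤ β := by
      have hsub : B ⊆ {ξ | ξ ∈ Ξ ∧ C ξ ≤ v} := by
        rintro x ⟨h1, h2⟩; exact ⟨h1, le_of_lt h2⟩
      have := ENNReal.toReal_mono (measure_ne_top P _) (measure_mono hsub)
      calc (P B).toReal ≤ (P {ξ | ξ ∈ Ξ ∧ C ξ ≤ v}).toReal := this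
        _ = β := hΨv
    have hge : β ≤ (P B).toReal := by
      have h1 : ∀ n : ℕ, Ψ (v - 1 / (n + 1)) ≤ (P B).toReal := by
        intro n
        have hsub : {ξ | ξ ∈ Ξ ∧ C ξ ≤ v - 1 / (n + 1)} ⊆ B := by
          rintro x ⟨hx1, hx2⟩
          refine ⟨hx1, lt_of_le_of_lt hx2 ?_⟩
          have : (0:ℝ) < 1 / (n + 1) := by positivity
          linarith
        exact ENNReal.toReal_mono (measure_ne_top P _) (measure_mono hsub)
      have h2 : Filter.Tendsto (fun n : ℕ => Ψ (v - 1 / (n + 1))) Filter.atTop (nhds β) := by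
        have ht : Filter.Tendsto (fun n : ℕ => v - 1 / (n + 1)) Filter.atTop (nhds v) := by
          have : Filter.Tendsto (fun n : ℕ => 1 / ((n:ℝ) + 1)) Filter.atTop (nhds 0) :=
            tendsto_one_div_add_atTop_nhds_zero_nat
          simpa using Filter.Tendsto.sub (tendsto_const_nhds (x := v)) this
        have := (hΨ.tendsto v).comp ht
        rwa [hΨv] at this
      exact le_of_tendsto h2 (Filter.Eventually.of_forall h1)
    linarith
  -- measure of A is 1 - β
  have hPA : (P A).toReal = 1 - β := by
    have hsum : P A + P B = 1 := by
      rw [← measure_union hABdisj hBm, hABunion, hPΞ]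
    have : (P A).toReal + (P B).toReal = 1 := by
      rw [← ENNReal.toReal_add (measure_ne_top P _) (measure_ne_top P _), hsum]
      simp
    linarith [hPB ▸ this]
  -- integrability
  have hCint : IntegrableOn C Ξ P := hC.integrableOn_compact hΞ
  have hmaxCont : ∀ α : ℝ, ContinuousOn (fun x => max (C x - α) 0) Ξ := fun α =>
    ContinuousOn.sup (hC.sub continuousOn_const) continuousOn_const
  have hInt : ∀ α : ℝ, IntegrableOn (fun x => max (C x - α) 0) Ξ P := fun α =>
    (hmaxCont α).integrableOn_compact hΞ
  have hCintA : IntegrableOn C A P := hCint.mono_set Set.inter_subset_left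
  -- the integral identity at v
  have hIv : ∫ x in Ξ, max (C x - v) 0 ∂P = (∫ x in A, C x ∂P) - v * (1 - β) := by
    have hsplit : ∫ x in Ξ, max (C x - v) 0 ∂P
        = (∫ x in A, max (C x - v) 0 ∂P) + ∫ x in B, max (C x - v) 0 ∂P := by
      rw [← hABunion]
      exact setIntegral_union hABdisj hBm
        ((hInt v).mono_set (hABunion ▸ Set.subset_union_left))
        ((hInt v).mono_set (hABunion ▸ Set.subset_union_right))
    have hB0 : ∫ x in B, max (C x - v) 0 ∂P = 0 := by
      rw [setIntegral_congr_fun hBm (g := fun _ => (0:ℝ))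
        (fun x hx => max_eq_right (by have := hx.2; simp only [Set.mem_setOf_eq] at this ⊢; linarith))]
      simp
    have hAeq : ∫ x in A, max (C x - v) 0 ∂P = ∫ x in A, (C x - v) ∂P := by
      refine setIntegral_congr_fun hAm (fun x hx => ?_)
      exact max_eq_left (by have := hx.2; simp only [Set.mem_setOf_eq] at this; linarith)
    have hAsub : ∫ x in A, (C x - v) ∂P = (∫ x in A, C x ∂P) - v * (1 - β) := by
      rw [integral_sub hCintA (integrableOn_const (measure_ne_top P A))]
      rw [setIntegral_const, measureReal_def, hPA, smul_eq_mul]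
      ring
    rw [hsplit, hB0, hAeq, hAsub, add_zero]
  -- CVaR equals the objective at v
  have hCVaR : CVaR Ξ P C β = v + (1 / (1 - β)) * ∫ x in Ξ, max (C x - v) 0 ∂P := by
    have hAset : {ξ | ξ ∈ Ξ ∧ VaR Ξ P C β ≤ C ξ} = A := by
      ext x; simp [hAdef, hvdef, Set.mem_setOf_eq, Set.mem_inter_iff]
    rw [CVaR, hAset, hIv]
    field_simp
    ring
  -- minimality
  have hmin : ∀ α : ℝ,
      v + (1 / (1 - β)) * ∫ x in Ξ, max (C x - v) 0 ∂P
        ≤ α + (1 / (1 - β)) * ∫ x in Ξ, max (C x - α) 0 ∂P := by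
    intro α
    have hindInt : Integrable (A.indicator fun _ => α - v) P :=
      (integrable_const (α - v)).indicator hAm
    have hkey : ∫ x in Ξ, max (C x - v) 0 ∂P
        ≤ (∫ x in Ξ, max (C x - α) 0 ∂P) + (α - v) * (1 - β) := by
      have hpt : ∀ x ∈ Ξ, max (C x - v) 0
          ≤ max (C x - α) 0 + A.indicator (fun _ => α - v) x := by
        intro x hx
        by_cases hvx : v ≤ C x
        · have hxA : x ∈ A := ⟨hx, hvx⟩
          rw [Set.indicator_of_mem hxA]
          refine max_le ?_ ?_
          · linarith [le_max_left (C x - α) (0:ℝ)]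
          · linarith [le_max_left (C x - α) (0:ℝ)]
        · have hxA : x ∉ A := fun h => hvx h.2
          rw [Set.indicator_of_notMem hxA, add_zero]
          refine max_le ?_ (le_max_right _ _)
          push_neg at hvx
          linarith [le_max_right (C x - α) (0:ℝ)]
      have hmono := setIntegral_mono_on (hInt v) ((hInt α).add hindInt.integrableOn) hΞm hpt
      have hadd : ∫ x in Ξ, (max (C x - α) 0 + A.indicator (fun _ => α - v) x) ∂P
          = (∫ x in Ξ, max (C x - α) 0 ∂P) + ∫ x in Ξ, A.indicator (fun _ => α - v) x ∂P :=
        integral_add (hInt α) hindInt.integrableOn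
      have hind : ∫ x in Ξ, A.indicator (fun _ => α - v) x ∂P = (α - v) * (1 - β) := by
        rw [setIntegral_indicator hAm, Set.inter_eq_self_of_subset_right Set.inter_subset_left,
          setIntegral_const, measureReal_def, hPA, smul_eq_mul]
        ring
      calc ∫ x in Ξ, max (C x - v) 0 ∂P
          ≤ ∫ x in Ξ, (max (C x - α) 0 + A.indicator (fun _ => α - v) x) ∂P := hmono
        _ = (∫ x in Ξ, max (C x - α) 0 ∂P) + (α - v) * (1 - β) := by rw [hadd, hind]
    have hc : (0:ℝ) < 1 / (1 - β) := by positivity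
    have hmul := mul_le_mul_of_nonneg_left hkey (le_of_lt hc)
    have hexp : (1 / (1 - β)) * ((α - v) * (1 - β)) = α - v := by
      field_simp
    rw [mul_add, hexp] at hmul
    linarith
  -- assemble
  set F : ℝ → ℝ := fun α => α + (1 / (1 - β)) * ∫ ξ in Ξ, max (C ξ - α) 0 ∂P with hFdef
  have hbdd : BddBelow (Set.range F) := ⟨F v, by rintro y ⟨α, rfl⟩; exact hmin α⟩
  have hFinf : F v = ⨅ α : ℝ, F α :=
    le_antisymm (le_ciInf hmin) (ciInf_le hbdd v)
  exact ⟨hCVaR.trans hFinf, hFinf⟩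
end
end

section
/- Let Ξ ⊂ ℝ^k be compact, P a Borel probability measure on Ξ, C : Ξ → ℝ continuous, and β ∈ (0,1). Assume the cumulative distribution function Ψ(t) = P{ξ ∈ Ξ : C(ξ) ≤ t} is continuous and strictly increasing on the interval [min_Ξ C, max_Ξ C]. Then α = VaR_β(C) is the unique minimizer of the function α ↦ α + (1/(1−β)) ∫_Ξ [C(ξ) − α]_+ dP(ξ) over α ∈ ℝ. -/
open MeasureTheory

noncomputable section

theorem var_unique_minimizer {k : ℕ} (Ξ : Set (Euc k)) (hΞ : IsCompact Ξ)
    (P : Measure (Euc k)) [IsProbabilityMeasure P] (hP : P Ξᶜ = 0)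
    (C : Euc k → ℝ) (hC : ContinuousOn C Ξ)
    (β : ℝ) (hβ : β ∈ Set.Ioo (0 : ℝ) 1)
    (hΨcont : ContinuousOn (cdf Ξ P C) (Set.Icc (sInf (C '' Ξ)) (sSup (C '' Ξ))))
    (hΨmono : StrictMonoOn (cdf Ξ P C) (Set.Icc (sInf (C '' Ξ)) (sSup (C '' Ξ)))) :
    (∀ α : ℝ,
      VaR Ξ P C β + (1 / (1 - β)) * ∫ ξ in Ξ, max (C ξ - VaR Ξ P C β) 0 ∂P
        ≤ α + (1 / (1 - β)) * ∫ ξ in Ξ, max (C ξ - α) 0 ∂P) ∧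
    (∀ α : ℝ,
      (∀ α' : ℝ,
        α + (1 / (1 - β)) * ∫ ξ in Ξ, max (C ξ - α) 0 ∂P
          ≤ α' + (1 / (1 - β)) * ∫ ξ in Ξ, max (C ξ - α') 0 ∂P) →
      α = VaR Ξ P C β) := by
  obtain ⟨hβ0, hβ1⟩ := hβ
  have hβne : (1:ℝ) - β ≠ 0 := by linarith
  set c := 1 / (1 - β) with hc
  have hc1 : 1 < c := by
    rw [hc, lt_div_iff₀ (by linarith : (0:ℝ) < 1 - β)]; linarith
  have hc0 : (0:ℝ) < c := lt_trans one_pos hc1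
  have mΞ : MeasurableSet Ξ := hΞ.isClosed.measurableSet
  have hΞne : Ξ.Nonempty := by
    by_contra h
    rw [Set.not_nonempty_iff_eq_empty] at h
    rw [h, Set.compl_empty, measure_univ] at hP
    exact one_ne_zero hP
  have himg : IsCompact (C '' Ξ) := hΞ.image_of_continuousOn hC
  have himgne : (C '' Ξ).Nonempty := hΞne.image C
  set m := sInf (C '' Ξ) with hm
  set M := sSup (C '' Ξ) with hM
  have hmle : ∀ ξ ∈ Ξ, m ≤ C ξ := fun ξ hξ => csInf_le himg.bddBelow ⟨ξ, hξ, rfl⟩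
  have hleM : ∀ ξ ∈ Ξ, C ξ ≤ M := fun ξ hξ => le_csSup himg.bddAbove ⟨ξ, hξ, rfl⟩
  obtain ⟨ξ₀, hξ₀⟩ := hΞne
  have hmM : m ≤ M := le_trans (hmle ξ₀ hξ₀) (hleM ξ₀ hξ₀)
  have hPΞ : P Ξ = 1 := by
    have h := measure_add_measure_compl (μ := P) mΞ
    rw [hP, add_zero, measure_univ] at h
    exact h
  have hA : ∀ t : ℝ, MeasurableSet {ξ | ξ ∈ Ξ ∧ C ξ ≤ t} := fun t =>
    (hC.preimage_isClosed_of_isClosed hΞ.isClosed isClosed_Iic).measurableSet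
  have hB : ∀ t : ℝ, MeasurableSet (Ξ ∩ C ⁻¹' Set.Ioi t) := by
    intro t
    have : Ξ ∩ C ⁻¹' Set.Ioi t = Ξ \ {ξ | ξ ∈ Ξ ∧ C ξ ≤ t} := by
      ext ξ
      simp only [Set.mem_inter_iff, Set.mem_preimage, Set.mem_Ioi, Set.mem_diff,
        Set.mem_setOf_eq]
      constructor
      · rintro ⟨h1, h2⟩; exact ⟨h1, fun h => absurd h.2 (not_le.2 h2)⟩
      · rintro ⟨h1, h2⟩; exact ⟨h1, lt_of_not_ge fun h => h2 ⟨h1, h⟩⟩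
    rw [this]; exact mΞ.diff (hA t)
  have hΨval : ∀ t, cdf Ξ P C t = (P {ξ | ξ ∈ Ξ ∧ C ξ ≤ t}).toReal := fun t => rfl
  have hΨmono' : Monotone (cdf Ξ P C) := by
    intro s t hst
    exact ENNReal.toReal_mono (measure_ne_top P _)
      (measure_mono fun ξ h => ⟨h.1, h.2.trans hst⟩)
  have hPB : ∀ t, (P (Ξ ∩ C ⁻¹' Set.Ioi t)).toReal = 1 - cdf Ξ P C t := by
    intro t
    have hsub : {ξ | ξ ∈ Ξ ∧ C ξ ≤ t} ⊆ Ξ := fun ξ h => h.1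
    have hdiff : Ξ ∩ C ⁻¹' Set.Ioi t = Ξ \ {ξ | ξ ∈ Ξ ∧ C ξ ≤ t} := by
      ext ξ
      simp only [Set.mem_inter_iff, Set.mem_preimage, Set.mem_Ioi, Set.mem_diff,
        Set.mem_setOf_eq]
      constructor
      · rintro ⟨h1, h2⟩; exact ⟨h1, fun h => absurd h.2 (not_le.2 h2)⟩
      · rintro ⟨h1, h2⟩; exact ⟨h1, lt_of_not_ge fun h => h2 ⟨h1, h⟩⟩
    rw [hdiff, measure_diff hsub (hA t).nullMeasurableSet (measure_ne_top P _),
      ENNReal.toReal_sub_of_le (measure_mono hsub) (measure_ne_top P _), hPΞ,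
      ENNReal.toReal_one, hΨval]
  have hΨM : cdf Ξ P C M = 1 := by
    have : {ξ | ξ ∈ Ξ ∧ C ξ ≤ M} = Ξ := by
      ext ξ; exact ⟨fun h => h.1, fun h => ⟨h, hleM ξ h⟩⟩
    rw [hΨval, this, hPΞ, ENNReal.toReal_one]
  have hΨzero : ∀ t, t < m → cdf Ξ P C t = 0 := by
    intro t ht
    have : {ξ | ξ ∈ Ξ ∧ C ξ ≤ t} = ∅ := by
      ext ξ
      simp only [Set.mem_setOf_eq, Set.mem_empty_iff_false, iff_false, not_and, not_le]
      exact fun h1 => lt_of_lt_of_le ht (hmle ξ h1)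
    rw [hΨval, this, measure_empty, ENNReal.toReal_zero]
  -- the set defining VaR
  set S := {t : ℝ | β ≤ cdf Ξ P C t} with hS
  have hVaR : VaR Ξ P C β = sInf S := rfl
  have hMS : M ∈ S := by rw [hS, Set.mem_setOf_eq, hΨM]; exact le_of_lt hβ1
  have hSne : S.Nonempty := ⟨M, hMS⟩
  have hSlb : ∀ t ∈ S, m ≤ t := by
    intro t ht
    by_contra h
    push_neg at h
    rw [hS, Set.mem_setOf_eq, hΨzero t h] at ht
    linarith
  have hbdd : BddBelow S := ⟨m, hSlb⟩
  set v := VaR Ξ P C β with hv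
  have hvInf : v = sInf S := rfl
  have hstar_ge : m ≤ v := le_csInf hSne hSlb
  have hstar_le : v ≤ M := csInf_le hbdd hMS
  have hltv : ∀ t, t < v → cdf Ξ P C t < β := by
    intro t ht
    by_contra h
    push_neg at h
    exact absurd (csInf_le hbdd h) (not_le.2 ht)
  -- Ψ(v) ≥ β
  have hΨv_ge : β ≤ cdf Ξ P C v := by
    have hmem : ∀ n : ℕ, β ≤ cdf Ξ P C (min (v + 1/(n+1)) M) := by
      intro n
      rcases le_total M (v + 1/(n+1)) with h | h
      · rw [min_eq_right h, hΨM]; exact le_of_lt hβ1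
      · rw [min_eq_left h]
        obtain ⟨t, htS, htlt⟩ := Real.lt_sInf_add_pos hSne
          (by positivity : (0:ℝ) < 1/((n:ℝ)+1))
        exact le_trans htS (hΨmono' (le_of_lt (hvInf ▸ htlt)))
    have htend : Filter.Tendsto (fun n : ℕ => min (v + 1/(n+1)) M) Filter.atTop (nhds v) := by
      have h1 : Filter.Tendsto (fun n : ℕ => v + 1/((n:ℝ)+1)) Filter.atTop (nhds (v + 0)) :=
        Filter.Tendsto.const_add _ tendsto_one_div_add_atTop_nhds_zero_nat
      rw [add_zero] at h1
      have h2 := h1.min (tendsto_const_nhds (x := M))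
      rwa [min_eq_left hstar_le] at h2
    have hin : ∀ n : ℕ, min (v + 1/((n:ℝ)+1)) M ∈ Set.Icc m M := by
      intro n
      have hp : (0:ℝ) < 1/((n:ℝ)+1) := by positivity
      exact ⟨le_min (by linarith) hmM, min_le_right _ _⟩
    have hcw : ContinuousWithinAt (cdf Ξ P C) (Set.Icc m M) v := hΨcont v ⟨hstar_ge, hstar_le⟩
    have htend2 : Filter.Tendsto (fun n : ℕ => cdf Ξ P C (min (v + 1/(n+1)) M))
        Filter.atTop (nhds (cdf Ξ P C v)) :=
      (hcw.tendsto).comp (tendsto_nhdsWithin_of_tendsto_nhds_of_eventually_within _ htend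
        (Filter.Eventually.of_forall hin))
    exact ge_of_tendsto htend2 (Filter.Eventually.of_forall hmem)
  -- Ψ(v) ≤ β when m < v
  have hΨv_le : m < v → cdf Ξ P C v ≤ β := by
    intro hmv
    have hmem : ∀ n : ℕ, cdf Ξ P C (max (v - 1/(n+1)) m) ≤ β := by
      intro n
      have hp : (0:ℝ) < 1/((n:ℝ)+1) := by positivity
      have hlt' : max (v - 1/((n:ℝ)+1)) m < v := max_lt (by linarith) hmv
      exact le_of_lt (hltv _ hlt')
    have htend : Filter.Tendsto (fun n : ℕ => max (v - 1/(n+1)) m) Filter.atTop (nhds v) := by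
      have h1 : Filter.Tendsto (fun n : ℕ => v - 1/((n:ℝ)+1)) Filter.atTop (nhds (v - 0)) :=
        Filter.Tendsto.const_sub _ tendsto_one_div_add_atTop_nhds_zero_nat
      rw [sub_zero] at h1
      have h2 := h1.max (tendsto_const_nhds (x := m))
      rwa [max_eq_left hstar_ge] at h2
    have hin : ∀ n : ℕ, max (v - 1/((n:ℝ)+1)) m ∈ Set.Icc m M := by
      intro n
      have hp : (0:ℝ) < 1/((n:ℝ)+1) := by positivity
      exact ⟨le_max_right _ _, max_le (by linarith [hstar_le]) hmM⟩
    have hcw : ContinuousWithinAt (cdf Ξ P C) (Set.Icc m M) v := hΨcont v ⟨hstar_ge, hstar_le⟩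
    have htend2 : Filter.Tendsto (fun n : ℕ => cdf Ξ P C (max (v - 1/(n+1)) m))
        Filter.atTop (nhds (cdf Ξ P C v)) :=
      (hcw.tendsto).comp (tendsto_nhdsWithin_of_tendsto_nhds_of_eventually_within _ htend
        (Filter.Eventually.of_forall hin))
    exact le_of_tendsto htend2 (Filter.Eventually.of_forall hmem)
  -- integrability
  have hCae : ∀ α : ℝ, IntegrableOn (fun ξ => max (C ξ - α) 0) Ξ P := by
    intro α
    have hmeas : AEMeasurable (fun ξ => max (C ξ - α) 0) (P.restrict Ξ) :=
      ((hC.aemeasurable mΞ).sub aemeasurable_const).max aemeasurable_const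
    refine ⟨hmeas.aestronglyMeasurable, HasFiniteIntegral.of_bounded (C := max (M - α) 0) ?_⟩
    filter_upwards [ae_restrict_mem mΞ] with ξ hξ
    rw [Real.norm_eq_abs, abs_of_nonneg (le_max_right _ _)]
    exact max_le_max (by linarith [hleM ξ hξ]) le_rfl
  -- key upper bound
  have key_ub : ∀ α₁ α₂ : ℝ, α₁ ≤ α₂ →
      (∫ ξ in Ξ, max (C ξ - α₁) 0 ∂P) - (∫ ξ in Ξ, max (C ξ - α₂) 0 ∂P)
        ≤ (α₂ - α₁) * (1 - cdf Ξ P C α₁) := by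
    intro α₁ α₂ h12
    have hB1 := hB α₁
    have hptwise : ∀ ξ ∈ Ξ, max (C ξ - α₁) 0 - max (C ξ - α₂) 0
        ≤ (Ξ ∩ C ⁻¹' Set.Ioi α₁).indicator (fun _ => α₂ - α₁) ξ := by
      intro ξ hξ
      by_cases hc' : α₁ < C ξ
      · rw [Set.indicator_of_mem (show ξ ∈ Ξ ∩ C ⁻¹' Set.Ioi α₁ from ⟨hξ, hc'⟩)]
        rcases le_total (C ξ) α₂ with h | h
        · rw [max_eq_right (by linarith : C ξ - α₂ ≤ 0), sub_zero]
          exact max_le (by linarith) (by linarith)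
        · rw [max_eq_left (by linarith : (0:ℝ) ≤ C ξ - α₁),
            max_eq_left (by linarith : (0:ℝ) ≤ C ξ - α₂)]
          linarith
      · push_neg at hc'
        rw [Set.indicator_of_notMem (fun hmem => absurd hmem.2 (not_lt.2 hc'))]
        rw [max_eq_right (by linarith : C ξ - α₁ ≤ 0),
          max_eq_right (by linarith : C ξ - α₂ ≤ 0)]
        linarith
    have hint_ind : IntegrableOn ((Ξ ∩ C ⁻¹' Set.Ioi α₁).indicator (fun _ => α₂ - α₁)) Ξ P :=
      (integrable_const _).indicator hB1
    have hsub : IntegrableOn (fun ξ => max (C ξ - α₁) 0 - max (C ξ - α₂) 0) Ξ P :=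
      (hCae α₁).sub (hCae α₂)
    have hmono := setIntegral_mono_on hsub hint_ind mΞ hptwise
    rw [integral_sub (hCae α₁) (hCae α₂)] at hmono
    rw [setIntegral_indicator hB1, setIntegral_const,
      Set.inter_eq_self_of_subset_right Set.inter_subset_left, smul_eq_mul, Measure.real, hPB α₁] at hmono
    calc (∫ ξ in Ξ, max (C ξ - α₁) 0 ∂P) - (∫ ξ in Ξ, max (C ξ - α₂) 0 ∂P)
        ≤ (1 - cdf Ξ P C α₁) * (α₂ - α₁) := hmono
      _ = (α₂ - α₁) * (1 - cdf Ξ P C α₁) := mul_comm _ _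
  -- key lower bound
  have key_lb : ∀ α₁ α₂ : ℝ, α₁ ≤ α₂ →
      (α₂ - α₁) * (1 - cdf Ξ P C α₂)
        ≤ (∫ ξ in Ξ, max (C ξ - α₁) 0 ∂P) - (∫ ξ in Ξ, max (C ξ - α₂) 0 ∂P) := by
    intro α₁ α₂ h12
    have hB2 := hB α₂
    have hptwise : ∀ ξ ∈ Ξ, (Ξ ∩ C ⁻¹' Set.Ioi α₂).indicator (fun _ => α₂ - α₁) ξ
        ≤ max (C ξ - α₁) 0 - max (C ξ - α₂) 0 := by
      intro ξ hξ
      by_cases hc' : α₂ < C ξ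
      · rw [Set.indicator_of_mem (show ξ ∈ Ξ ∩ C ⁻¹' Set.Ioi α₂ from ⟨hξ, hc'⟩),
          max_eq_left (by linarith : (0:ℝ) ≤ C ξ - α₁),
          max_eq_left (by linarith : (0:ℝ) ≤ C ξ - α₂)]
        linarith
      · rw [Set.indicator_of_notMem (fun hmem => absurd hmem.2 hc')]
        have : max (C ξ - α₂) 0 ≤ max (C ξ - α₁) 0 :=
          max_le_max (by linarith) le_rfl
        linarith
    have hint_ind : IntegrableOn ((Ξ ∩ C ⁻¹' Set.Ioi α₂).indicator (fun _ => α₂ - α₁)) Ξ P :=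
      (integrable_const _).indicator hB2
    have hsub : IntegrableOn (fun ξ => max (C ξ - α₁) 0 - max (C ξ - α₂) 0) Ξ P :=
      (hCae α₁).sub (hCae α₂)
    have hmono := setIntegral_mono_on hint_ind hsub mΞ hptwise
    rw [integral_sub (hCae α₁) (hCae α₂)] at hmono
    rw [setIntegral_indicator hB2, setIntegral_const,
      Set.inter_eq_self_of_subset_right Set.inter_subset_left, smul_eq_mul, Measure.real, hPB α₂] at hmono
    calc (α₂ - α₁) * (1 - cdf Ξ P C α₂)
        = (1 - cdf Ξ P C α₂) * (α₂ - α₁) := mul_comm _ _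
      _ ≤ _ := hmono
  -- algebraic identity
  have hid : ∀ d x : ℝ, d - c * (d * (1 - x)) = d * (c * (x - β)) := by
    intro d x
    rw [hc]
    field_simp
    ring
  -- F-level bounds
  have Fge : ∀ α₁ α₂ : ℝ, α₁ ≤ α₂ →
      (α₂ - α₁) * (c * (cdf Ξ P C α₁ - β))
        ≤ (α₂ + c * ∫ ξ in Ξ, max (C ξ - α₂) 0 ∂P)
          - (α₁ + c * ∫ ξ in Ξ, max (C ξ - α₁) 0 ∂P) := by
    intro α₁ α₂ h
    have h1 := key_ub α₁ α₂ h
    have h2 : c * ((∫ ξ in Ξ, max (C ξ - α₁) 0 ∂P) - (∫ ξ in Ξ, max (C ξ - α₂) 0 ∂P))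
        ≤ c * ((α₂ - α₁) * (1 - cdf Ξ P C α₁)) := mul_le_mul_of_nonneg_left h1 hc0.le
    have h3 := hid (α₂ - α₁) (cdf Ξ P C α₁)
    have hexp : (α₂ + c * ∫ ξ in Ξ, max (C ξ - α₂) 0 ∂P)
          - (α₁ + c * ∫ ξ in Ξ, max (C ξ - α₁) 0 ∂P)
        = (α₂ - α₁) - c * ((∫ ξ in Ξ, max (C ξ - α₁) 0 ∂P)
            - (∫ ξ in Ξ, max (C ξ - α₂) 0 ∂P)) := by ring
    rw [hexp, ← h3]
    linarith
  have Flb : ∀ α₁ α₂ : ℝ, α₁ ≤ α₂ →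
      (α₂ + c * ∫ ξ in Ξ, max (C ξ - α₂) 0 ∂P)
          - (α₁ + c * ∫ ξ in Ξ, max (C ξ - α₁) 0 ∂P)
        ≤ (α₂ - α₁) * (c * (cdf Ξ P C α₂ - β)) := by
    intro α₁ α₂ h
    have h1 := key_lb α₁ α₂ h
    have h2 : c * ((α₂ - α₁) * (1 - cdf Ξ P C α₂))
        ≤ c * ((∫ ξ in Ξ, max (C ξ - α₁) 0 ∂P) - (∫ ξ in Ξ, max (C ξ - α₂) 0 ∂P)) :=
      mul_le_mul_of_nonneg_left h1 hc0.le
    have h3 := hid (α₂ - α₁) (cdf Ξ P C α₂)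
    have hexp : (α₂ + c * ∫ ξ in Ξ, max (C ξ - α₂) 0 ∂P)
          - (α₁ + c * ∫ ξ in Ξ, max (C ξ - α₁) 0 ∂P)
        = (α₂ - α₁) - c * ((∫ ξ in Ξ, max (C ξ - α₁) 0 ∂P)
            - (∫ ξ in Ξ, max (C ξ - α₂) 0 ∂P)) := by ring
    rw [hexp, ← h3]
    linarith
  -- exact difference for α ≤ m
  have hGlow : ∀ α : ℝ, α ≤ m →
      (∫ ξ in Ξ, max (C ξ - α) 0 ∂P) - (∫ ξ in Ξ, max (C ξ - m) 0 ∂P) = m - α := by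
    intro α hα
    have h1 : Set.EqOn (fun ξ => max (C ξ - α) 0 - max (C ξ - m) 0) (fun _ => m - α) Ξ := by
      intro ξ hξ
      have h2 := hmle ξ hξ
      simp only
      rw [max_eq_left (by linarith : (0:ℝ) ≤ C ξ - α),
        max_eq_left (by linarith : (0:ℝ) ≤ C ξ - m)]
      ring
    rw [← integral_sub (hCae α) (hCae m), setIntegral_congr_fun mΞ h1, setIntegral_const,
      Measure.real, hPΞ, ENNReal.toReal_one, one_smul]
  constructor
  · intro α
    rcases le_total v α with h | h
    · have h1 := Fge v α h
      have hnn : 0 ≤ (α - v) * (c * (cdf Ξ P C v - β)) :=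
        mul_nonneg (by linarith) (mul_nonneg hc0.le (by linarith [hΨv_ge]))
      linarith
    · rcases eq_or_lt_of_le hstar_ge with he | hlt'
      · have hα : α ≤ m := by rw [he]; exact h
        have hg := hGlow α hα
        rw [← he]
        have h3 : c * (∫ ξ in Ξ, max (C ξ - α) 0 ∂P)
            - c * (∫ ξ in Ξ, max (C ξ - m) 0 ∂P) = c * (m - α) := by
          rw [← mul_sub, hg]
        have h4 : m - α ≤ c * (m - α) := le_mul_of_one_le_left (by linarith) hc1.le
        linarith
      · have h1 := Flb α v h
        have hΨ := hΨv_le hlt'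
        have h2 : c * (cdf Ξ P C v - β) ≤ 0 :=
          mul_nonpos_of_nonneg_of_nonpos hc0.le (by linarith)
        have h3 : (v - α) * (c * (cdf Ξ P C v - β)) ≤ 0 :=
          mul_nonpos_of_nonneg_of_nonpos (by linarith) h2
        linarith
  · intro α hmin
    by_contra hne
    rcases lt_or_gt_of_ne hne with hlt' | hgt
    · rcases lt_or_ge α m with ham | ham
      · have hg := hGlow α ham.le
        have h3 : c * (∫ ξ in Ξ, max (C ξ - α) 0 ∂P)
            - c * (∫ ξ in Ξ, max (C ξ - m) 0 ∂P) = c * (m - α) := by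
          rw [← mul_sub, hg]
        have h4 : m - α < c * (m - α) := by nlinarith
        have h5 := hmin m
        linarith
      · set s := (α + v)/2 with hs'
        have hs1 : α < s := by rw [hs']; linarith
        have hs2 : s < v := by rw [hs']; linarith
        have hΨs := hltv s hs2
        have h1 := Flb α s hs1.le
        have hneg : (s - α) * (c * (cdf Ξ P C s - β)) < 0 :=
          mul_neg_of_pos_of_neg (by linarith) (mul_neg_of_pos_of_neg hc0 (by linarith))
        have h5 := hmin s
        linarith
    · rcases le_or_gt α M with haM | haM
      · set s := (v + α)/2 with hs'
        have hs1 : v < s := by rw [hs']; linarith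
        have hs2 : s < α := by rw [hs']; linarith
        have hsI : s ∈ Set.Icc m M := ⟨by linarith [hstar_ge], by linarith⟩
        have hΨs : β < cdf Ξ P C s :=
          lt_of_le_of_lt hΨv_ge (hΨmono ⟨hstar_ge, hstar_le⟩ hsI hs1)
        have h1 := Fge s α hs2.le
        have hpos : 0 < (α - s) * (c * (cdf Ξ P C s - β)) :=
          mul_pos (by linarith) (mul_pos hc0 (by linarith))
        have h5 := hmin s
        linarith
      · have hzα : ∫ ξ in Ξ, max (C ξ - α) 0 ∂P = 0 := by
          have h1 : Set.EqOn (fun ξ => max (C ξ - α) 0) (fun _ => (0:ℝ)) Ξ := by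
            intro ξ hξ
            simp only
            rw [max_eq_right (by linarith [hleM ξ hξ] : C ξ - α ≤ 0)]
          rw [setIntegral_congr_fun mΞ h1, integral_const, smul_zero]
        have hzM : ∫ ξ in Ξ, max (C ξ - M) 0 ∂P = 0 := by
          have h1 : Set.EqOn (fun ξ => max (C ξ - M) 0) (fun _ => (0:ℝ)) Ξ := by
            intro ξ hξ
            simp only
            rw [max_eq_right (by linarith [hleM ξ hξ] : C ξ - M ≤ 0)]
          rw [setIntegral_congr_fun mΞ h1, integral_const, smul_zero]
        have h5 := hmin M
        rw [hzα, hzM] at h5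
        simp only [mul_zero, add_zero] at h5
        linarith
end
end

section
/- Let Ξ ⊂ ℝ^k be compact, P a Borel probability measure on Ξ, C : Ξ → ℝ continuous, and β ∈ (0,1). Assume the cumulative distribution function Ψ(t) = P{ξ ∈ Ξ : C(ξ) ≤ t} is continuous on ℝ. Define F(α) = α + (1/(1−β)) ∫_Ξ [C(ξ) − α]_+ dP(ξ). Then F(VaR_β(C)) = CVaR_β(C). -/
open MeasureTheory

noncomputable section

theorem F_at_var_eq_cvar {k : ℕ} (Ξ : Set (Euc k)) (hΞ : IsCompact Ξ)
    (P : Measure (Euc k)) [IsProbabilityMeasure P] (hP : P Ξᶜ = 0)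
    (C : Euc k → ℝ) (hC : ContinuousOn C Ξ)
    (β : ℝ) (hβ : β ∈ Set.Ioo (0 : ℝ) 1)
    (hΨ : Continuous (cdf Ξ P C)) :
    VaR Ξ P C β + (1 / (1 - β)) * ∫ ξ in Ξ, max (C ξ - VaR Ξ P C β) 0 ∂P
      = CVaR Ξ P C β := by
  obtain ⟨hβ0, hβ1⟩ := hβ
  set α := VaR Ξ P C β with hα
  -- basic facts
  have hΞne : Ξ.Nonempty := by
    rcases Set.eq_empty_or_nonempty Ξ with h | h
    · exfalso
      rw [h, Set.compl_empty] at hP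
      simp [measure_univ] at hP
    · exact h
  have hΞmeas : MeasurableSet Ξ := hΞ.isClosed.measurableSet
  have hPΞ : P Ξ = 1 := by
    have := measure_add_measure_compl (μ := P) hΞmeas
    rw [hP, add_zero] at this
    simpa using this
  -- closedness of sublevel / superlevel sets
  have hBclosed : ∀ t : ℝ, IsClosed {ξ | ξ ∈ Ξ ∧ C ξ ≤ t} := by
    intro t
    have : {ξ | ξ ∈ Ξ ∧ C ξ ≤ t} = Ξ ∩ C ⁻¹' (Set.Iic t) := by
      ext ξ; exact Iff.rfl
    rw [this]
    exact hC.preimage_isClosed_of_isClosed hΞ.isClosed isClosed_Iic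
  set A := {ξ | ξ ∈ Ξ ∧ α ≤ C ξ} with hAdef
  have hAclosed : IsClosed A := by
    have : A = Ξ ∩ C ⁻¹' (Set.Ici α) := by
      ext ξ; exact Iff.rfl
    rw [this]
    exact hC.preimage_isClosed_of_isClosed hΞ.isClosed isClosed_Ici
  have hAmeas : MeasurableSet A := hAclosed.measurableSet
  have hAsub : A ⊆ Ξ := fun ξ h => h.1
  have hAcompact : IsCompact A := hΞ.of_isClosed_subset hAclosed hAsub
  -- cdf is monotone
  have hmono : Monotone (cdf Ξ P C) := by
    intro s t hst
    exact ENNReal.toReal_mono (measure_ne_top P _)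
      (measure_mono (fun ξ h => ⟨h.1, h.2.trans hst⟩))
  -- the set defining VaR
  set S := {t : ℝ | β ≤ cdf Ξ P C t} with hSdef
  have hSne : S.Nonempty := by
    obtain ⟨ξ₀, hξ₀, hmax⟩ := hΞ.exists_isMaxOn hΞne hC
    refine ⟨C ξ₀, ?_⟩
    have : {ξ | ξ ∈ Ξ ∧ C ξ ≤ C ξ₀} = Ξ := by
      ext ξ; exact ⟨fun h => h.1, fun h => ⟨h, hmax h⟩⟩
    simp only [hSdef, Set.mem_setOf_eq, cdf, this, hPΞ]
    simpa using hβ1.le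
  have hSbdd : BddBelow S := by
    obtain ⟨ξ₁, hξ₁, hmin⟩ := hΞ.exists_isMinOn hΞne hC
    refine ⟨C ξ₁, fun t ht => ?_⟩
    by_contra hlt
    push_neg at hlt
    have hempty : {ξ | ξ ∈ Ξ ∧ C ξ ≤ t} = ∅ := by
      ext ξ
      simp only [Set.mem_setOf_eq, Set.mem_empty_iff_false, iff_false]
      rintro ⟨hξ, hle⟩
      exact absurd (le_trans (hmin hξ) hle) (not_le.mpr hlt)
    have : cdf Ξ P C t = 0 := by simp [cdf, hempty]
    rw [hSdef] at ht
    simp only [Set.mem_setOf_eq, this] at ht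
    linarith
  have hSclosed : IsClosed S := by
    have : S = cdf Ξ P C ⁻¹' Set.Ici β := rfl
    rw [this]; exact isClosed_Ici.preimage hΨ
  -- Ψ(α) = β
  have hΨα : cdf Ξ P C α = β := by
    have h1 : β ≤ cdf Ξ P C α := hSclosed.csInf_mem hSne hSbdd
    refine le_antisymm ?_ h1
    by_contra hgt
    push_neg at hgt
    have hopen : IsOpen (cdf Ξ P C ⁻¹' Set.Ioi β) := isOpen_Ioi.preimage hΨ
    have hmem : α ∈ cdf Ξ P C ⁻¹' Set.Ioi β := hgt
    obtain ⟨δ, hδ, hball⟩ := Metric.isOpen_iff.mp hopen α hmem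
    have ht : α - δ/2 ∈ S := by
      have hmem2 : α - δ/2 ∈ Metric.ball α δ := by
        rw [Metric.mem_ball, Real.dist_eq, abs_of_nonpos (by linarith)]
        linarith
      have hβlt : β < cdf Ξ P C (α - δ/2) := hball hmem2
      exact hβlt.le
    have h2 : α ≤ α - δ/2 := csInf_le hSbdd ht
    linarith
  -- P{ξ ∈ Ξ, C ξ < α} = β
  have hltmeas : MeasurableSet {ξ | ξ ∈ Ξ ∧ C ξ < α} := by
    have : {ξ | ξ ∈ Ξ ∧ C ξ < α} = Ξ \ A := by
      ext ξ
      constructor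
      · rintro ⟨h1, h2⟩
        exact ⟨h1, fun h3 => absurd h3.2 (not_le.mpr h2)⟩
      · rintro ⟨h1, h2⟩
        refine ⟨h1, ?_⟩
        by_contra h3
        exact h2 ⟨h1, not_lt.mp h3⟩
    rw [this]
    exact hΞmeas.diff hAmeas
  have hPlt : (P {ξ | ξ ∈ Ξ ∧ C ξ < α}).toReal = β := by
    refine le_antisymm ?_ ?_
    · calc (P {ξ | ξ ∈ Ξ ∧ C ξ < α}).toReal
          ≤ cdf Ξ P C α :=
            ENNReal.toReal_mono (measure_ne_top P _)
              (measure_mono (fun ξ h => ⟨h.1, h.2.le⟩))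
        _ = β := hΨα
    · -- limit of cdf (α - 1/(n+1))
      have hseq : Filter.Tendsto (fun n : ℕ => cdf Ξ P C (α - 1/(n+1)))
          Filter.atTop (nhds (cdf Ξ P C α)) := by
        apply (hΨ.tendsto α).comp
        have : Filter.Tendsto (fun n : ℕ => α - 1/((n:ℝ)+1)) Filter.atTop (nhds (α - 0)) :=
          tendsto_const_nhds.sub tendsto_one_div_add_atTop_nhds_zero_nat
        simpa using this
      have hle : ∀ n : ℕ, cdf Ξ P C (α - 1/(n+1)) ≤ (P {ξ | ξ ∈ Ξ ∧ C ξ < α}).toReal := by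
        intro n
        apply ENNReal.toReal_mono (measure_ne_top P _)
        apply measure_mono
        intro ξ h
        refine ⟨h.1, lt_of_le_of_lt h.2 ?_⟩
        have : (0:ℝ) < 1/((n:ℝ)+1) := by positivity
        linarith
      rw [← hΨα]
      exact le_of_tendsto hseq (Filter.Eventually.of_forall hle)
  -- P A = 1 - β
  have hPA : (P A).toReal = 1 - β := by
    have hdisj : Disjoint A {ξ | ξ ∈ Ξ ∧ C ξ < α} := by
      rw [Set.disjoint_left]
      rintro ξ ⟨_, h1⟩ ⟨_, h2⟩
      exact absurd h1 (not_le.mpr h2)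
    have hunion : A ∪ {ξ | ξ ∈ Ξ ∧ C ξ < α} = Ξ := by
      ext ξ
      constructor
      · rintro (h | h) <;> exact h.1
      · intro h
        rcases le_or_gt α (C ξ) with h' | h'
        · exact Or.inl ⟨h, h'⟩
        · exact Or.inr ⟨h, h'⟩
    have := measure_union (μ := P) hdisj hltmeas
    rw [hunion, hPΞ] at this
    have htr : (P A).toReal + (P {ξ | ξ ∈ Ξ ∧ C ξ < α}).toReal = 1 := by
      rw [← ENNReal.toReal_add (measure_ne_top P _) (measure_ne_top P _), ← this]
      simp
    rw [hPlt] at htr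
    linarith
  -- integrability
  have hintA : IntegrableOn C A P :=
    (hC.mono hAsub).integrableOn_compact' hAcompact hAmeas
  have hintmax : IntegrableOn (fun ξ => max (C ξ - α) 0) Ξ P := by
    apply ContinuousOn.integrableOn_compact' hΞ hΞmeas
    exact ((hC.sub continuousOn_const).sup continuousOn_const)
  -- split the integral
  have hsplit : ∫ ξ in Ξ, max (C ξ - α) 0 ∂P = (∫ ξ in A, C ξ ∂P) - α * (1 - β) := by
    have hΞeq : Ξ = A ∪ {ξ | ξ ∈ Ξ ∧ C ξ < α} := by
      ext ξ
      constructor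
      · intro h
        rcases le_or_gt α (C ξ) with h' | h'
        · exact Or.inl ⟨h, h'⟩
        · exact Or.inr ⟨h, h'⟩
      · rintro (h | h) <;> exact h.1
    have hdisj : Disjoint A {ξ | ξ ∈ Ξ ∧ C ξ < α} := by
      rw [Set.disjoint_left]
      rintro ξ ⟨_, h1⟩ ⟨_, h2⟩
      exact absurd h1 (not_le.mpr h2)
    rw [hΞeq, setIntegral_union hdisj hltmeas
      (hintmax.mono_set hAsub)
      (hintmax.mono_set (fun ξ h => h.1))]
    have h2 : ∫ ξ in {ξ | ξ ∈ Ξ ∧ C ξ < α}, max (C ξ - α) 0 ∂P = 0 := by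
      rw [setIntegral_congr_fun hltmeas (g := fun _ => (0:ℝ))]
      · simp
      · intro ξ hξ
        simp only
        rw [max_eq_right]
        linarith [hξ.2]
    have h1 : ∫ ξ in A, max (C ξ - α) 0 ∂P = ∫ ξ in A, (C ξ - α) ∂P := by
      apply setIntegral_congr_fun hAmeas
      intro ξ hξ
      simp only
      rw [max_eq_left]
      linarith [hξ.2]
    rw [h1, h2, add_zero]
    rw [integral_sub hintA ((integrableOn_const_iff).mpr (Or.inr (measure_lt_top P A)))]
    rw [setIntegral_const, measureReal_def, hPA, smul_eq_mul]
    ring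
  -- conclude
  rw [hsplit, CVaR, ← hα]
  have h1β : (1:ℝ) - β ≠ 0 := by linarith
  field_simp
  rw [hAdef]
  ring
end
end

section
/- Let Ξ ⊂ ℝ^k be compact, P a Borel probability measure on Ξ, C : Ξ → ℝ continuous, and β ∈ (0,1). Assume the cumulative distribution function Ψ(t) = P{ξ ∈ Ξ : C(ξ) ≤ t} is continuous on ℝ. Define F(α) = α + (1/(1−β)) ∫_Ξ [C(ξ) − α]_+ dP(ξ). Then F(α) ≥ CVaR_β(C) for every α ∈ ℝ. -/
open MeasureTheory

noncomputable section

theorem F_ge_cvar {k : ℕ} (Ξ : Set (Euc k)) (hΞ : IsCompact Ξ)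
    (P : Measure (Euc k)) [IsProbabilityMeasure P] (hP : P Ξᶜ = 0)
    (C : Euc k → ℝ) (hC : ContinuousOn C Ξ)
    (β : ℝ) (hβ : β ∈ Set.Ioo (0 : ℝ) 1)
    (hΨ : Continuous (cdf Ξ P C)) :
    ∀ α : ℝ,
      CVaR Ξ P C β ≤ α + (1 / (1 - β)) * ∫ ξ in Ξ, max (C ξ - α) 0 ∂P := by
  intro α
  obtain ⟨hβ0, hβ1⟩ := hβ
  have h1β : (0:ℝ) < 1 - β := by linarith
  have hΞmeas : MeasurableSet Ξ := hΞ.isClosed.measurableSet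
  have hPΞ : P Ξ = 1 := by
    have h := measure_add_measure_compl (μ := P) hΞmeas
    rw [hP, add_zero] at h
    simpa using h
  have hΞne : Ξ.Nonempty := by
    rcases Set.eq_empty_or_nonempty Ξ with h | h
    · exfalso; rw [h] at hPΞ; simp at hPΞ
    · exact h
  -- bound on C
  obtain ⟨M, hM⟩ : ∃ M : ℝ, ∀ ξ ∈ Ξ, |C ξ| ≤ M := by
    obtain ⟨M, hM⟩ := (hΞ.image_of_continuousOn hC).isBounded.subset_ball 0
    exact ⟨M, fun ξ hξ => by
      have := hM (Set.mem_image_of_mem C hξ)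
      simpa [Real.dist_eq, abs_sub_comm] using le_of_lt (mem_ball_iff_norm.mp this)⟩
  -- level sets are closed
  have hlev : ∀ t : ℝ, IsClosed {ξ | ξ ∈ Ξ ∧ C ξ ≤ t} := by
    intro t
    have : {ξ | ξ ∈ Ξ ∧ C ξ ≤ t} = Ξ ∩ C ⁻¹' Set.Iic t := rfl
    rw [this]
    exact hC.preimage_isClosed_of_isClosed hΞ.isClosed isClosed_Iic
  set S : Set ℝ := {t : ℝ | β ≤ cdf Ξ P C t} with hS
  have hSne : S.Nonempty := by
    refine ⟨M, ?_⟩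
    have hset : {ξ | ξ ∈ Ξ ∧ C ξ ≤ M} = Ξ := by
      ext ξ; constructor
      · rintro ⟨h1, _⟩; exact h1
      · intro h1; exact ⟨h1, (abs_le.mp (hM ξ h1)).2⟩
    simp only [hS, Set.mem_setOf_eq, cdf, hset, hPΞ]
    norm_num; linarith
  have hSbdd : BddBelow S := by
    refine ⟨-M - 1, fun t ht => ?_⟩
    by_contra hlt
    push_neg at hlt
    have hset : {ξ | ξ ∈ Ξ ∧ C ξ ≤ t} = ∅ := by
      ext ξ; simp only [Set.mem_setOf_eq, Set.mem_empty_iff_false, iff_false]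
      rintro ⟨h1, h2⟩
      have := (abs_le.mp (hM ξ h1)).1
      linarith
    have : cdf Ξ P C t = 0 := by simp [cdf, hset]
    rw [hS] at ht
    simp only [Set.mem_setOf_eq, this] at ht
    linarith
  have hSclosed : IsClosed S := isClosed_le continuous_const hΨ
  set v : ℝ := VaR Ξ P C β with hv
  have hvS : v ∈ S := hSclosed.csInf_mem hSne hSbdd
  have hΨv_ge : β ≤ cdf Ξ P C v := hvS
  have hΨv_le : cdf Ξ P C v ≤ β := by
    have htend : Filter.Tendsto (cdf Ξ P C) (nhdsWithin v (Set.Iio v)) (nhds (cdf Ξ P C v)) :=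
      (hΨ.tendsto v).mono_left nhdsWithin_le_nhds
    refine le_of_tendsto htend ?_
    filter_upwards [self_mem_nhdsWithin] with t ht
    have : t ∉ S := notMem_of_lt_csInf ht hSbdd
    rw [hS] at this
    simp only [Set.mem_setOf_eq, not_le] at this
    exact le_of_lt this
  have hΨv : cdf Ξ P C v = β := le_antisymm hΨv_le hΨv_ge
  have hPT : P {ξ | ξ ∈ Ξ ∧ C ξ ≤ v} = ENNReal.ofReal β := by
    have hne : P {ξ | ξ ∈ Ξ ∧ C ξ ≤ v} ≠ ⊤ := measure_ne_top _ _
    rw [← ENNReal.ofReal_toReal hne]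
    exact congrArg ENNReal.ofReal hΨv
  -- measure of strict sublevel set
  set B : Set (Euc k) := {ξ | ξ ∈ Ξ ∧ C ξ < v} with hB
  have hPB : P B = ENNReal.ofReal β := by
    set s : ℕ → Set (Euc k) := fun n => {ξ | ξ ∈ Ξ ∧ C ξ ≤ v - 1 / (n + 1)} with hs
    have hmono : Monotone s := by
      intro n m hnm ξ hξ
      refine ⟨hξ.1, le_trans hξ.2 ?_⟩
      have h1 : (0:ℝ) < (n:ℝ) + 1 := by positivity
      have h2 : (n:ℝ) + 1 ≤ (m:ℝ) + 1 := by exact_mod_cast by omega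
      have := one_div_le_one_div_of_le h1 h2
      linarith
    have hunion : (⋃ n, s n) = B := by
      ext ξ
      simp only [Set.mem_iUnion, hs, Set.mem_setOf_eq, hB]
      constructor
      · rintro ⟨n, h1, h2⟩
        have h1' : (0:ℝ) < 1 / ((n:ℝ) + 1) := by positivity
        exact ⟨h1, by linarith⟩
      · rintro ⟨h1, h2⟩
        obtain ⟨n, hn⟩ := exists_nat_one_div_lt (show 0 < v - C ξ by linarith)
        exact ⟨n, h1, by linarith⟩
    have htend1 : Filter.Tendsto (fun n : ℕ => P (s n)) Filter.atTop (nhds (P B)) := by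
      have := tendsto_measure_iUnion_atTop (μ := P) hmono
      rwa [hunion] at this
    have heq : ∀ n : ℕ, P (s n) = ENNReal.ofReal (cdf Ξ P C (v - 1 / (n + 1))) := by
      intro n
      rw [cdf, ENNReal.ofReal_toReal (measure_ne_top _ _)]
    have htend2 : Filter.Tendsto (fun n : ℕ => P (s n)) Filter.atTop
        (nhds (ENNReal.ofReal β)) := by
      simp only [heq]
      have hvt : Filter.Tendsto (fun n : ℕ => v - 1 / ((n:ℝ) + 1)) Filter.atTop (nhds v) := by
        have := tendsto_one_div_add_atTop_nhds_zero_nat (𝕜 := ℝ)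
        have h2 := Filter.Tendsto.const_sub v this
        simpa using h2
      have := (hΨ.tendsto v).comp hvt
      rw [hΨv] at this
      exact (ENNReal.continuous_ofReal.tendsto β).comp this
    exact tendsto_nhds_unique htend1 htend2
  -- the set A
  set A : Set (Euc k) := {ξ | ξ ∈ Ξ ∧ v ≤ C ξ} with hA
  have hAclosed : IsClosed A := by
    have : A = Ξ ∩ C ⁻¹' Set.Ici v := rfl
    rw [this]
    exact hC.preimage_isClosed_of_isClosed hΞ.isClosed isClosed_Ici
  have hAmeas : MeasurableSet A := hAclosed.measurableSet
  have hAcomp : IsCompact A := hΞ.of_isClosed_subset hAclosed (fun ξ hξ => hξ.1)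
  have hAsub : A ⊆ Ξ := fun ξ hξ => hξ.1
  have hPA : P A = ENNReal.ofReal (1 - β) := by
    have hdisj : Disjoint A B := by
      rw [Set.disjoint_left]
      rintro ξ ⟨h1, h2⟩ ⟨h3, h4⟩
      linarith
    have hABeq : A ∪ B = Ξ := by
      ext ξ
      constructor
      · rintro (⟨h1, _⟩ | ⟨h1, _⟩) <;> exact h1
      · intro h1
        rcases le_or_gt v (C ξ) with h | h
        · exact Or.inl ⟨h1, h⟩
        · exact Or.inr ⟨h1, h⟩
    have hBmeas : MeasurableSet B := by
      have : B = Ξ \ A := by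
        ext ξ
        simp only [hB, hA, Set.mem_setOf_eq, Set.mem_diff, not_and, not_le]
        constructor
        · rintro ⟨h1, h2⟩; exact ⟨h1, fun _ => h2⟩
        · rintro ⟨h1, h2⟩; exact ⟨h1, h2 h1⟩
      rw [this]; exact hΞmeas.diff hAmeas
    have := measure_union (μ := P) hdisj hBmeas
    rw [hABeq, hPΞ, hPB] at this
    have hkey : ENNReal.ofReal (1 - β) + ENNReal.ofReal β = 1 := by
      rw [← ENNReal.ofReal_add (by linarith) (by linarith)]
      norm_num
    have h2 : P A + ENNReal.ofReal β = ENNReal.ofReal (1 - β) + ENNReal.ofReal β := by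
      rw [hkey, ← this]
    exact (ENNReal.add_left_inj ENNReal.ofReal_ne_top).mp h2
  have hPAtoReal : (P A).toReal = 1 - β := by
    rw [hPA, ENNReal.toReal_ofReal (by linarith)]
  -- integrability
  have hIntA : IntegrableOn C A P :=
    (hC.mono hAsub).integrableOn_compact hAcomp
  have hmaxCont : ContinuousOn (fun ξ => max (C ξ - α) 0) Ξ :=
    ((hC.sub continuousOn_const).sup continuousOn_const : ContinuousOn (fun ξ => max (C ξ - α) 0) Ξ)
  have hIntmaxΞ : IntegrableOn (fun ξ => max (C ξ - α) 0) Ξ P :=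
    hmaxCont.integrableOn_compact hΞ
  have hIntmaxA : IntegrableOn (fun ξ => max (C ξ - α) 0) A P :=
    hIntmaxΞ.mono_set hAsub
  have hIntmaxA' : IntegrableOn (fun ξ => max (C ξ - α) 0 + α) A P :=
    hIntmaxA.add ((integrableOn_const_iff (C := α)).mpr (Or.inr (measure_lt_top _ _)))
  -- main chain of inequalities
  have step1 : ∫ ξ in A, C ξ ∂P ≤ ∫ ξ in A, (max (C ξ - α) 0 + α) ∂P := by
    refine setIntegral_mono_on hIntA hIntmaxA' hAmeas ?_
    intro ξ _
    have : C ξ - α ≤ max (C ξ - α) 0 := le_max_left _ _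
    linarith
  have step2 : ∫ ξ in A, (max (C ξ - α) 0 + α) ∂P
      = (∫ ξ in A, max (C ξ - α) 0 ∂P) + α * (1 - β) := by
    rw [integral_add hIntmaxA ((integrableOn_const_iff (C := α)).mpr (Or.inr (measure_lt_top _ _)))]
    congr 1
    rw [setIntegral_const, measureReal_def, hPAtoReal, smul_eq_mul, mul_comm]
  have step3 : ∫ ξ in A, max (C ξ - α) 0 ∂P ≤ ∫ ξ in Ξ, max (C ξ - α) 0 ∂P := by
    refine setIntegral_mono_set hIntmaxΞ ?_ (HasSubset.Subset.eventuallyLE hAsub)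
    filter_upwards with ξ using le_max_right _ _
  have hchain : ∫ ξ in A, C ξ ∂P ≤ (∫ ξ in Ξ, max (C ξ - α) 0 ∂P) + α * (1 - β) := by
    calc ∫ ξ in A, C ξ ∂P ≤ ∫ ξ in A, (max (C ξ - α) 0 + α) ∂P := step1
      _ = (∫ ξ in A, max (C ξ - α) 0 ∂P) + α * (1 - β) := step2
      _ ≤ (∫ ξ in Ξ, max (C ξ - α) 0 ∂P) + α * (1 - β) := by linarith
  -- conclude
  have hcpos : (0:ℝ) < 1 / (1 - β) := by positivity
  rw [CVaR]
  have : (1 / (1 - β)) * ∫ ξ in A, C ξ ∂P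
      ≤ (1 / (1 - β)) * ((∫ ξ in Ξ, max (C ξ - α) 0 ∂P) + α * (1 - β)) :=
    mul_le_mul_of_nonneg_left hchain (le_of_lt hcpos)
  have heq : (1 / (1 - β)) * ((∫ ξ in Ξ, max (C ξ - α) 0 ∂P) + α * (1 - β))
      = α + (1 / (1 - β)) * ∫ ξ in Ξ, max (C ξ - α) 0 ∂P := by
    field_simp
    ring
  rw [heq] at this
  exact this
end
end

section
/- Let Ξ ⊂ ℝ^k be compact, P a Borel probability measure on Ξ, C : Ξ → ℝ continuous, and β ∈ (0,1). Assume the cumulative distribution function Ψ(t) = P{ξ ∈ Ξ : C(ξ) ≤ t} is continuous on ℝ. Then for every α ≥ VaR_β(C), the function F(α) = α + (1/(1−β)) ∫_Ξ [C(ξ) − α]_+ dP(ξ) satisfies F(α) = (1/(1−β)) ∫_{{ξ ∈ Ξ : C(ξ) ≥ VaR_β(C)}} max(C(ξ), α) dP(ξ). -/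
open MeasureTheory

noncomputable section

theorem F_eq_integral_max_of_var_le {k : ℕ} (Ξ : Set (Euc k)) (hΞ : IsCompact Ξ)
    (P : Measure (Euc k)) [IsProbabilityMeasure P] (hP : P Ξᶜ = 0)
    (C : Euc k → ℝ) (hC : ContinuousOn C Ξ)
    (β : ℝ) (hβ : β ∈ Set.Ioo (0 : ℝ) 1)
    (hΨ : Continuous (cdf Ξ P C)) :
    ∀ α : ℝ, VaR Ξ P C β ≤ α →
      α + (1 / (1 - β)) * ∫ ξ in Ξ, max (C ξ - α) 0 ∂P
        = (1 / (1 - β)) * ∫ ξ in {ξ | ξ ∈ Ξ ∧ VaR Ξ P C β ≤ C ξ}, max (C ξ) α ∂P := by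
  intro α hα
  obtain ⟨hβ0, hβ1⟩ := hβ
  set v := VaR Ξ P C β with hv
  have hΞcl : IsClosed Ξ := hΞ.isClosed
  have mΞ : MeasurableSet Ξ := hΞcl.measurableSet
  -- closedness of sublevel sets
  have hEcl : ∀ t : ℝ, IsClosed {ξ | ξ ∈ Ξ ∧ C ξ ≤ t} := by
    intro t
    have h : {ξ | ξ ∈ Ξ ∧ C ξ ≤ t} = Ξ ∩ C ⁻¹' Set.Iic t := rfl
    rw [h]
    exact hC.preimage_isClosed_of_isClosed hΞcl isClosed_Iic
  have mE : ∀ t : ℝ, MeasurableSet {ξ | ξ ∈ Ξ ∧ C ξ ≤ t} := fun t => (hEcl t).measurableSet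
  -- A : the superlevel set
  set A : Set (Euc k) := {ξ | ξ ∈ Ξ ∧ v ≤ C ξ} with hA
  have hAcl : IsClosed A := by
    have h : A = Ξ ∩ C ⁻¹' Set.Ici v := rfl
    rw [h]
    exact hC.preimage_isClosed_of_isClosed hΞcl isClosed_Ici
  have mA : MeasurableSet A := hAcl.measurableSet
  have hAsub : A ⊆ Ξ := fun ξ hξ => hξ.1
  have hAcp : IsCompact A := hΞ.of_isClosed_subset hAcl hAsub
  -- P Ξ = 1
  have hPΞ : P Ξ = 1 := by
    have h := measure_add_measure_compl (μ := P) mΞ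
    rw [hP, add_zero, measure_univ] at h
    exact h
  have hΞne : Ξ.Nonempty := by
    rcases Ξ.eq_empty_or_nonempty with h | h
    · exfalso; rw [h] at hPΞ; simp at hPΞ
    · exact h
  -- S
  set S : Set ℝ := {t : ℝ | β ≤ cdf Ξ P C t} with hS
  obtain ⟨ξM, hξM, hmax⟩ := hΞ.exists_isMaxOn hΞne hC
  obtain ⟨ξm, hξm, hmin⟩ := hΞ.exists_isMinOn hΞne hC
  have hSne : S.Nonempty := by
    refine ⟨C ξM, ?_⟩
    have h1 : {ξ | ξ ∈ Ξ ∧ C ξ ≤ C ξM} = Ξ := by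
      ext ξ; simp only [Set.mem_setOf_eq]
      exact ⟨fun h => h.1, fun h => ⟨h, hmax h⟩⟩
    simp only [hS, Set.mem_setOf_eq, cdf, h1, hPΞ, ENNReal.toReal_one]
    exact hβ1.le
  have hSbdd : BddBelow S := by
    refine ⟨C ξm, fun t ht => ?_⟩
    by_contra hlt
    push_neg at hlt
    have hempty : {ξ | ξ ∈ Ξ ∧ C ξ ≤ t} = ∅ := by
      ext ξ; simp only [Set.mem_setOf_eq, Set.mem_empty_iff_false, iff_false]
      rintro ⟨hξ, hle⟩
      exact absurd (le_trans (hmin hξ) hle) (not_le.mpr hlt)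
    have : cdf Ξ P C t = 0 := by simp [cdf, hempty]
    rw [hS] at ht
    simp only [Set.mem_setOf_eq, this] at ht
    linarith
  have hScl : IsClosed S := by
    have h : S = cdf Ξ P C ⁻¹' Set.Ici β := rfl
    rw [h]; exact isClosed_Ici.preimage hΨ
  have hvS : v ∈ S := by rw [hv, VaR]; exact hScl.csInf_mem hSne hSbdd
  -- Ψ v = β
  have hΨv : cdf Ξ P C v = β := by
    refine le_antisymm ?_ hvS
    by_contra h
    push_neg at h
    have hopen : IsOpen (cdf Ξ P C ⁻¹' Set.Ioi β) := isOpen_Ioi.preimage hΨ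
    obtain ⟨ε, hε, hball⟩ := Metric.isOpen_iff.mp hopen v h
    have ht : v - ε / 2 ∈ S := by
      have hmem : v - ε / 2 ∈ Metric.ball v ε := by
        rw [Metric.mem_ball, Real.dist_eq]
        have heq : v - ε / 2 - v = -(ε / 2) := by ring
        rw [heq, abs_neg, abs_of_nonneg (by linarith)]
        linarith
      have h2 := hball hmem
      simp only [Set.mem_preimage, Set.mem_Ioi] at h2
      exact le_of_lt h2
    have : v ≤ v - ε / 2 := by rw [hv, VaR]; exact csInf_le hSbdd ht
    linarith
  -- P {C < v} = ofReal β
  have hPlt : P {ξ | ξ ∈ Ξ ∧ C ξ < v} = ENNReal.ofReal β := by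
    set E : ℕ → Set (Euc k) := fun n => {ξ | ξ ∈ Ξ ∧ C ξ ≤ v - 1 / (n + 1)} with hE
    have hmono : Monotone E := by
      intro m n hmn ξ hξ
      refine ⟨hξ.1, le_trans hξ.2 ?_⟩
      have h1 : (1 : ℝ) / (n + 1) ≤ 1 / (m + 1) := by
        apply one_div_le_one_div_of_le (by positivity)
        have hcast : (m : ℝ) ≤ n := Nat.cast_le.mpr hmn
        linarith
      linarith
    have hunion : (⋃ n, E n) = {ξ | ξ ∈ Ξ ∧ C ξ < v} := by
      ext ξ
      simp only [Set.mem_iUnion, hE, Set.mem_setOf_eq]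
      constructor
      · rintro ⟨n, hξΞ, hle⟩
        refine ⟨hξΞ, lt_of_le_of_lt hle ?_⟩
        have : (0 : ℝ) < 1 / (n + 1) := by positivity
        linarith
      · rintro ⟨hξΞ, hlt⟩
        obtain ⟨n, hn⟩ := exists_nat_one_div_lt (sub_pos.mpr hlt)
        exact ⟨n, hξΞ, by linarith⟩
    have h1 : Filter.Tendsto (fun n => P (E n)) Filter.atTop (nhds (P (⋃ n, E n))) :=
      tendsto_measure_iUnion_atTop hmono
    have h2 : Filter.Tendsto (fun n => P (E n)) Filter.atTop (nhds (ENNReal.ofReal β)) := by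
      have heq : ∀ n : ℕ, P (E n) = ENNReal.ofReal (cdf Ξ P C (v - 1 / (n + 1))) := by
        intro n
        rw [cdf, ENNReal.ofReal_toReal (measure_ne_top P _)]
      simp only [heq]
      apply ENNReal.tendsto_ofReal
      have h3 : Filter.Tendsto (fun n : ℕ => v - 1 / ((n : ℝ) + 1)) Filter.atTop (nhds v) := by
        have := tendsto_one_div_add_atTop_nhds_zero_nat (𝕜 := ℝ)
        have h4 := Filter.Tendsto.const_sub v this
        simpa using h4
      have := (hΨ.tendsto v).comp h3
      rwa [hΨv] at this
    rw [← hunion]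
    exact tendsto_nhds_unique h1 h2
  -- P A
  have hdisj : Disjoint {ξ | ξ ∈ Ξ ∧ C ξ < v} A := by
    rw [Set.disjoint_left]
    rintro ξ ⟨_, hlt⟩ ⟨_, hle⟩
    exact absurd hle (not_le.mpr hlt)
  have hsplit : {ξ | ξ ∈ Ξ ∧ C ξ < v} ∪ A = Ξ := by
    ext ξ
    simp only [Set.mem_union, hA, Set.mem_setOf_eq]
    constructor
    · rintro (⟨h, _⟩ | ⟨h, _⟩) <;> exact h
    · intro h
      rcases lt_or_ge (C ξ) v with h' | h'
      · exact Or.inl ⟨h, h'⟩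
      · exact Or.inr ⟨h, h'⟩
  have hPsum : P {ξ | ξ ∈ Ξ ∧ C ξ < v} + P A = 1 := by
    rw [← measure_union hdisj mA, hsplit, hPΞ]
  have hPA : (P A).toReal = 1 - β := by
    have h1 : (P {ξ | ξ ∈ Ξ ∧ C ξ < v}).toReal + (P A).toReal = 1 := by
      rw [← ENNReal.toReal_add (measure_ne_top P _) (measure_ne_top P _), hPsum, ENNReal.toReal_one]
    rw [hPlt, ENNReal.toReal_ofReal hβ0.le] at h1
    linarith
  -- integrability
  have hf_cont : ContinuousOn (fun ξ => max (C ξ - α) 0) Ξ :=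
    (continuous_id.max continuous_const).comp_continuousOn (hC.sub continuousOn_const)
  have hf_int : IntegrableOn (fun ξ => max (C ξ - α) 0) Ξ P := hf_cont.integrableOn_compact hΞ
  have hf_intA : IntegrableOn (fun ξ => max (C ξ - α) 0) A P := hf_int.mono_set hAsub
  have hg_intA : IntegrableOn (fun ξ => max (C ξ) α) A P :=
    ((continuous_id.max continuous_const).comp_continuousOn (hC.mono hAsub)).integrableOn_compact hAcp
  -- ∫_Ξ f = ∫_A f
  have hint1 : ∫ ξ in Ξ, max (C ξ - α) 0 ∂P = ∫ ξ in A, max (C ξ - α) 0 ∂P := by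
    have hsplit2 : A ∪ (Ξ \ A) = Ξ := Set.union_diff_cancel hAsub
    have hdisj2 : Disjoint A (Ξ \ A) := Set.disjoint_sdiff_right.mono_left le_rfl
    rw [← hsplit2, setIntegral_union hdisj2 (mΞ.diff mA) hf_intA (hf_int.mono_set Set.diff_subset)]
    have hzero : ∫ ξ in Ξ \ A, max (C ξ - α) 0 ∂P = 0 := by
      rw [setIntegral_congr_fun (mΞ.diff mA) (g := fun _ => (0 : ℝ)), integral_zero]
      rintro ξ ⟨hξΞ, hξA⟩
      simp only [hA, Set.mem_setOf_eq, not_and, not_le] at hξA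
      have : C ξ < v := hξA hξΞ
      simp only [max_eq_right_iff, sub_nonpos]
      linarith
    rw [hzero, add_zero]
  -- ∫_A g = ∫_A f + α (1-β)
  have hint2 : ∫ ξ in A, max (C ξ) α ∂P = (∫ ξ in A, max (C ξ - α) 0 ∂P) + α * (1 - β) := by
    have heqn : Set.EqOn (fun ξ => max (C ξ) α) (fun ξ => max (C ξ - α) 0 + α) A := by
      intro ξ _
      simp only
      rcases le_total (C ξ) α with h | h
      · rw [max_eq_right h, max_eq_right (by linarith : C ξ - α ≤ 0), zero_add]
      · rw [max_eq_left h, max_eq_left (by linarith : (0:ℝ) ≤ C ξ - α)]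
        ring
    rw [setIntegral_congr_fun mA heqn,
      integral_add hf_intA (integrableOn_const (measure_ne_top P A)),
      setIntegral_const, Measure.real, hPA, smul_eq_mul]
    ring
  rw [hint1, hint2]
  have hne : (1 : ℝ) - β ≠ 0 := by linarith
  field_simp
  ring
end
end

section
/- Let Ξ ⊂ ℝ^k be compact, P a Borel probability measure on Ξ, C : Ξ → ℝ continuous, and β ∈ (0,1). Assume the cumulative distribution function Ψ(t) = P{ξ ∈ Ξ : C(ξ) ≤ t} is continuous on ℝ. Then for every α ≤ VaR_β(C), the function F(α) = α + (1/(1−β)) ∫_Ξ [C(ξ) − α]_+ dP(ξ) satisfies F(α) = CVaR_β(C) + (1/(1−β)) ∫_{{ξ ∈ Ξ : α ≤ C(ξ) ≤ VaR_β(C)}} (C(ξ) − α) dP(ξ). -/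
open MeasureTheory

noncomputable section

theorem F_eq_cvar_add_of_le_var {k : ℕ} (Ξ : Set (Euc k)) (hΞ : IsCompact Ξ)
    (P : Measure (Euc k)) [IsProbabilityMeasure P] (hP : P Ξᶜ = 0)
    (C : Euc k → ℝ) (hC : ContinuousOn C Ξ)
    (β : ℝ) (hβ : β ∈ Set.Ioo (0 : ℝ) 1)
    (hΨ : Continuous (cdf Ξ P C)) :
    ∀ α : ℝ, α ≤ VaR Ξ P C β →
      α + (1 / (1 - β)) * ∫ ξ in Ξ, max (C ξ - α) 0 ∂P
        = CVaR Ξ P C β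
          + (1 / (1 - β))
            * ∫ ξ in {ξ | ξ ∈ Ξ ∧ α ≤ C ξ ∧ C ξ ≤ VaR Ξ P C β}, (C ξ - α) ∂P := by
  intro α hα
  -- extend C to a continuous function on the whole space
  obtain ⟨g, hg⟩ := ContinuousMap.exists_restrict_eq (Y := ℝ) hΞ.isClosed
      ⟨Ξ.restrict C, hC.restrict⟩
  have hgC : ∀ x ∈ Ξ, g x = C x := fun x hx => DFunLike.congr_fun hg ⟨x, hx⟩
  have hmΞ : MeasurableSet Ξ := hΞ.isClosed.measurableSet
  have hgm : Measurable g := g.continuous.measurable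
  have hβ1 : (0:ℝ) < 1 - β := by linarith [hβ.2]
  have hPΞ : P Ξ = 1 := by
    have h := measure_add_measure_compl (μ := P) hmΞ
    rw [hP, add_zero] at h
    simpa using h
  -- cdf with g
  have hcdf : cdf Ξ P C = cdf Ξ P g := by
    funext t
    unfold cdf
    congr 2
    ext ξ
    exact and_congr_right fun h1 => by rw [hgC ξ h1]
  have hVaR : VaR Ξ P C β = VaR Ξ P g β := by unfold VaR; rw [hcdf]
  set v : ℝ := VaR Ξ P C β with hv
  have hΨg : Continuous (cdf Ξ P g) := hcdf ▸ hΨ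
  -- Ξ nonempty
  have hne : Ξ.Nonempty := by
    rcases Ξ.eq_empty_or_nonempty with h | h
    · exfalso
      rw [h, Set.compl_empty] at hP
      simp at hP
    · exact h
  obtain ⟨zM, hzM, hzMmax⟩ := hΞ.exists_isMaxOn hne g.continuous.continuousOn
  obtain ⟨zm, hzm, hzmmin⟩ := hΞ.exists_isMinOn hne g.continuous.continuousOn
  set S : Set ℝ := {t : ℝ | β ≤ cdf Ξ P g t} with hS
  have hMS : g zM ∈ S := by
    have hset : {ξ | ξ ∈ Ξ ∧ g ξ ≤ g zM} = Ξ := by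
      ext ξ; exact ⟨fun h => h.1, fun h => ⟨h, hzMmax h⟩⟩
    show β ≤ cdf Ξ P g (g zM)
    unfold cdf
    rw [hset, hPΞ]
    simpa using hβ.2.le
  have hbdd : BddBelow S := by
    refine ⟨g zm, fun t ht => ?_⟩
    by_contra hlt
    push_neg at hlt
    have hset : {ξ | ξ ∈ Ξ ∧ g ξ ≤ t} = ∅ := by
      ext ξ
      simp only [Set.mem_setOf_eq, Set.mem_empty_iff_false, iff_false, not_and, not_le]
      intro hξ
      exact lt_of_lt_of_le hlt (hzmmin hξ)
    have : cdf Ξ P g t = 0 := by unfold cdf; rw [hset]; simp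
    rw [hS] at ht
    simp only [Set.mem_setOf_eq, this] at ht
    linarith [hβ.1]
  have hSclosed : IsClosed S := isClosed_le continuous_const hΨg
  have hvg : v = sInf S := hVaR
  have hvS : v ∈ S := hvg ▸ hSclosed.csInf_mem ⟨_, hMS⟩ hbdd
  have hΨv : cdf Ξ P g v = β := by
    refine le_antisymm ?_ hvS
    refine le_of_tendsto ((hΨg.tendsto v).mono_left (nhdsWithin_le_nhds (s := Set.Iio v))) ?_
    filter_upwards [self_mem_nhdsWithin] with t ht
    have ht' : t < v := ht
    by_contra h
    push_neg at h
    exact ht'.not_ge (hvg ▸ csInf_le hbdd h.le)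
  -- measure facts
  have hEvm : ∀ t : ℝ, MeasurableSet {ξ | ξ ∈ Ξ ∧ g ξ ≤ t} := fun t =>
    hmΞ.inter (measurableSet_le hgm measurable_const)
  have hEv : P {ξ | ξ ∈ Ξ ∧ g ξ ≤ v} = ENNReal.ofReal β := by
    rw [← hΨv]
    exact (ENNReal.ofReal_toReal (measure_ne_top P _)).symm
  have hltm : MeasurableSet {ξ | ξ ∈ Ξ ∧ g ξ < v} :=
    hmΞ.inter (measurableSet_lt hgm measurable_const)
  have hlt : P {ξ | ξ ∈ Ξ ∧ g ξ < v} = ENNReal.ofReal β := by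
    refine le_antisymm ?_ ?_
    · calc P {ξ | ξ ∈ Ξ ∧ g ξ < v} ≤ P {ξ | ξ ∈ Ξ ∧ g ξ ≤ v} :=
            measure_mono (fun ξ h => ⟨h.1, h.2.le⟩)
        _ = ENNReal.ofReal β := hEv
    · have htend : Filter.Tendsto
          (fun n : ℕ => ENNReal.ofReal (cdf Ξ P g (v - 1/(n+1)))) Filter.atTop
          (nhds (ENNReal.ofReal β)) := by
        rw [← hΨv]
        refine (ENNReal.continuous_ofReal.tendsto _).comp ?_
        refine (hΨg.tendsto v).comp ?_
        have h1 : Filter.Tendsto (fun n : ℕ => v - 1/((n:ℝ)+1)) Filter.atTop (nhds (v - 0)) :=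
          tendsto_const_nhds.sub tendsto_one_div_add_atTop_nhds_zero_nat
        simpa using h1
      refine le_of_tendsto htend ?_
      filter_upwards with n
      have hsub : {ξ | ξ ∈ Ξ ∧ g ξ ≤ v - 1/((n:ℝ)+1)} ⊆ {ξ | ξ ∈ Ξ ∧ g ξ < v} := by
        intro ξ ⟨h1, h2⟩
        refine ⟨h1, lt_of_le_of_lt h2 ?_⟩
        have : (0:ℝ) < 1/((n:ℝ)+1) := by positivity
        linarith
      calc ENNReal.ofReal (cdf Ξ P g (v - 1/(n+1)))
          = P {ξ | ξ ∈ Ξ ∧ g ξ ≤ v - 1/((n:ℝ)+1)} := by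
            unfold cdf; exact ENNReal.ofReal_toReal (measure_ne_top P _)
        _ ≤ P {ξ | ξ ∈ Ξ ∧ g ξ < v} := measure_mono hsub
  have heq0 : P {ξ | ξ ∈ Ξ ∧ g ξ = v} = 0 := by
    have hsub : {ξ | ξ ∈ Ξ ∧ g ξ = v} ⊆
        {ξ | ξ ∈ Ξ ∧ g ξ ≤ v} \ {ξ | ξ ∈ Ξ ∧ g ξ < v} := by
      rintro ξ ⟨h1, h2⟩
      exact ⟨⟨h1, h2.le⟩, fun h => absurd h.2 (by rw [h2]; exact lt_irrefl v)⟩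
    have hsub2 : {ξ : Euc k | ξ ∈ Ξ ∧ g ξ < v} ⊆ {ξ : Euc k | ξ ∈ Ξ ∧ g ξ ≤ v} :=
      fun ξ h => ⟨h.1, h.2.le⟩
    have hdiff : P ({ξ | ξ ∈ Ξ ∧ g ξ ≤ v} \ {ξ | ξ ∈ Ξ ∧ g ξ < v}) = 0 := by
      rw [measure_diff hsub2 hltm.nullMeasurableSet
        (measure_ne_top P _), hEv, hlt, tsub_self]
    exact le_antisymm (hdiff ▸ measure_mono hsub) zero_le
  -- measure of the upper tail
  set D : Set (Euc k) := {ξ | ξ ∈ Ξ ∧ v ≤ g ξ} with hD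
  have hDm : MeasurableSet D := hmΞ.inter (measurableSet_le measurable_const hgm)
  have hDdiff : D = Ξ \ {ξ | ξ ∈ Ξ ∧ g ξ < v} := by
    ext ξ
    simp only [hD, Set.mem_setOf_eq, Set.mem_diff, not_and, not_lt]
    constructor
    · exact fun h => ⟨h.1, fun _ => h.2⟩
    · exact fun h => ⟨h.1, h.2 h.1⟩
  have hPD : (P D).toReal = 1 - β := by
    rw [hDdiff, measure_diff (fun ξ h => h.1) hltm.nullMeasurableSet (measure_ne_top P _),
      hPΞ, hlt]
    rw [show (1 : ENNReal) = ENNReal.ofReal 1 by simp, ← ENNReal.ofReal_sub _ hβ.1.le]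
    rw [ENNReal.toReal_ofReal (by linarith [hβ.2])]
  -- integrability
  have hgint : IntegrableOn g Ξ P := g.continuous.continuousOn.integrableOn_compact hΞ
  have hgαint : IntegrableOn (fun ξ => g ξ - α) Ξ P :=
    hgint.sub ((integrableOn_const_iff).mpr (Or.inr (by rw [hPΞ]; exact ENNReal.one_lt_top)))
  set A : Set (Euc k) := {ξ | ξ ∈ Ξ ∧ α ≤ g ξ} with hA
  set B : Set (Euc k) := {ξ | ξ ∈ Ξ ∧ α ≤ g ξ ∧ g ξ ≤ v} with hB
  have hAm : MeasurableSet A := hmΞ.inter (measurableSet_le measurable_const hgm)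
  have hBm : MeasurableSet B :=
    hmΞ.inter ((measurableSet_le measurable_const hgm).inter (measurableSet_le hgm measurable_const))
  have hAsub : A ⊆ Ξ := fun ξ h => h.1
  have hBsub : B ⊆ Ξ := fun ξ h => h.1
  have hDsub : D ⊆ Ξ := fun ξ h => h.1
  -- Step 1: ∫_Ξ max (g - α) 0 = ∫_A (g - α)
  have I1 : ∫ ξ in Ξ, max (g ξ - α) 0 ∂P = ∫ ξ in A, (g ξ - α) ∂P := by
    have hsplit : Ξ = A ∪ (Ξ \ A) := (Set.union_diff_cancel hAsub).symm
    rw [hsplit, setIntegral_union disjoint_sdiff_self_right (hmΞ.diff hAm)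
      ((hgαint.mono_set hAsub).congr_fun (fun ξ hξ => (max_eq_left (by linarith [hξ.2])).symm) hAm)
      ((integrable_zero _ _ _).integrableOn.congr_fun
        (fun ξ hξ => by
          have : g ξ - α ≤ 0 := by
            have := hξ.2
            simp only [hA, Set.mem_setOf_eq, not_and, not_le] at this
            linarith [this hξ.1]
          exact (max_eq_right this).symm) (hmΞ.diff hAm))]
    rw [setIntegral_congr_fun hAm (fun ξ hξ => max_eq_left (by linarith [hξ.2])),
      setIntegral_congr_fun (hmΞ.diff hAm) (g := fun _ => (0:ℝ))
        (fun ξ hξ => by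
          have : ¬(α ≤ g ξ) := fun h => hξ.2 ⟨hξ.1, h⟩
          exact max_eq_right (by linarith [lt_of_not_ge this]))]
    simp
  -- Step 2: A = B ∪ D, ae-disjoint
  have hABD : A = B ∪ D := by
    ext ξ
    simp only [hA, hB, hD, Set.mem_union, Set.mem_setOf_eq]
    constructor
    · rintro ⟨h1, h2⟩
      rcases le_total (g ξ) v with h | h
      · exact Or.inl ⟨h1, h2, h⟩
      · exact Or.inr ⟨h1, h⟩
    · rintro (⟨h1, h2, _⟩ | ⟨h1, h2⟩)
      · exact ⟨h1, h2⟩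
      · exact ⟨h1, le_trans hα h2⟩
  have hBDdisj : AEDisjoint P B D := by
    refine measure_mono_null ?_ heq0
    intro ξ ⟨hb, hd⟩
    exact ⟨hb.1, le_antisymm hb.2.2 hd.2⟩
  have I2 : ∫ ξ in A, (g ξ - α) ∂P
      = (∫ ξ in B, (g ξ - α) ∂P) + ∫ ξ in D, (g ξ - α) ∂P := by
    rw [hABD]
    exact integral_union_ae hBDdisj hDm.nullMeasurableSet
      (hgαint.mono_set hBsub) (hgαint.mono_set hDsub)
  -- Step 3: ∫_D (g - α) = ∫_D g - α * (1 - β)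
  have I3 : ∫ ξ in D, (g ξ - α) ∂P = (∫ ξ in D, g ξ ∂P) - α * (1 - β) := by
    rw [integral_sub (hgint.mono_set hDsub)
      ((integrableOn_const_iff).mpr (Or.inr (lt_of_le_of_lt (measure_mono hDsub)
        (by rw [hPΞ]; exact ENNReal.one_lt_top))))]
    rw [setIntegral_const, measureReal_def, hPD, smul_eq_mul, mul_comm]
  -- rewrite goal in terms of g
  have hmax : ∫ ξ in Ξ, max (C ξ - α) 0 ∂P = ∫ ξ in Ξ, max (g ξ - α) 0 ∂P :=
    setIntegral_congr_fun hmΞ (fun ξ hξ => by rw [hgC ξ hξ])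
  have hCVaR : CVaR Ξ P C β = (1 / (1 - β)) * ∫ ξ in D, g ξ ∂P := by
    unfold CVaR
    congr 1
    rw [show {ξ | ξ ∈ Ξ ∧ VaR Ξ P C β ≤ C ξ} = D by
      ext ξ
      simp only [hD, Set.mem_setOf_eq]
      exact and_congr_right fun h1 => by rw [hgC ξ h1]]
    exact setIntegral_congr_fun hDm (fun ξ hξ => (hgC ξ hξ.1).symm)
  have hBset : {ξ | ξ ∈ Ξ ∧ α ≤ C ξ ∧ C ξ ≤ VaR Ξ P C β} = B := by
    ext ξ
    simp only [hB, Set.mem_setOf_eq]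
    exact and_congr_right fun h1 => by rw [hgC ξ h1]
  have hBint : ∫ ξ in {ξ | ξ ∈ Ξ ∧ α ≤ C ξ ∧ C ξ ≤ VaR Ξ P C β}, (C ξ - α) ∂P
      = ∫ ξ in B, (g ξ - α) ∂P := by
    rw [hBset]
    exact setIntegral_congr_fun hBm (fun ξ hξ => by rw [hgC ξ hξ.1])
  rw [hmax, hCVaR, hBint, I1, I2, I3]
  have hc : (1 / (1 - β)) * (1 - β) = 1 := one_div_mul_cancel (ne_of_gt hβ1)
  linear_combination (-α) * hc
end
end

section
/- Let Ξ ⊂ ℝ^k be compact and nonempty, P a Borel probability measure on Ξ, C : Ξ → ℝ continuous, β ∈ (0,1), and C_T ∈ ℝ. Assume the cumulative distribution function Ψ(t) = P{ξ ∈ Ξ : C(ξ) ≤ t} is continuous on ℝ. If CVaR_β(C) ≤ C_T, then P{ξ ∈ Ξ : C(ξ) ≥ C_T} ≤ 1 − β. -/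
open MeasureTheory

noncomputable section

theorem cvar_le_implies_prob_failure {k : ℕ} (Ξ : Set (Euc k)) (hΞ : IsCompact Ξ)
    (hne : Ξ.Nonempty)
    (P : Measure (Euc k)) [IsProbabilityMeasure P] (hP : P Ξᶜ = 0)
    (C : Euc k → ℝ) (hC : ContinuousOn C Ξ)
    (β : ℝ) (hβ : β ∈ Set.Ioo (0 : ℝ) 1) (CT : ℝ)
    (hΨ : Continuous (cdf Ξ P C)) :
    CVaR Ξ P C β ≤ CT → (P {ξ | ξ ∈ Ξ ∧ CT ≤ C ξ}).toReal ≤ 1 - β := by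
  intro hCVaR
  obtain ⟨hβ0, hβ1⟩ := hβ
  have hΞc : IsClosed Ξ := hΞ.isClosed
  have hΞm : MeasurableSet Ξ := hΞc.measurableSet
  have hPΞ : P Ξ = 1 := (prob_compl_eq_zero_iff hΞm).mp hP
  have hBclosed : ∀ t : ℝ, IsClosed {ξ | ξ ∈ Ξ ∧ C ξ ≤ t} := fun t =>
    hC.preimage_isClosed_of_isClosed hΞc isClosed_Iic
  have hAclosed : ∀ t : ℝ, IsClosed {ξ | ξ ∈ Ξ ∧ t ≤ C ξ} := fun t =>
    hC.preimage_isClosed_of_isClosed hΞc isClosed_Ici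
  obtain ⟨a, haΞ, ha⟩ := hΞ.exists_isMaxOn hne hC
  obtain ⟨b, hbΞ, hb⟩ := hΞ.exists_isMinOn hne hC
  set S := {t : ℝ | β ≤ cdf Ξ P C t} with hSdef
  have hSne : S.Nonempty := by
    refine ⟨C a, ?_⟩
    have hsub : Ξ ⊆ {ξ | ξ ∈ Ξ ∧ C ξ ≤ C a} := fun ξ hξ => ⟨hξ, ha hξ⟩
    have h1 : P {ξ | ξ ∈ Ξ ∧ C ξ ≤ C a} = 1 :=
      le_antisymm prob_le_one (hPΞ ▸ measure_mono hsub)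
    simp only [hSdef, Set.mem_setOf_eq, cdf, h1, ENNReal.toReal_one]
    exact hβ1.le
  have hSbdd : BddBelow S := by
    refine ⟨C b, fun t ht => ?_⟩
    by_contra h
    push_neg at h
    have hempty : {ξ | ξ ∈ Ξ ∧ C ξ ≤ t} = ∅ := by
      ext ξ
      simp only [Set.mem_setOf_eq, Set.mem_empty_iff_false, iff_false, not_and, not_le]
      exact fun hξ => lt_of_lt_of_le h (hb hξ)
    have h0 : cdf Ξ P C t = 0 := by simp [cdf, hempty]
    simp only [hSdef, Set.mem_setOf_eq, h0] at ht
    linarith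
  set v := VaR Ξ P C β with hvdef
  have hSclosed : IsClosed S := isClosed_Ici.preimage hΨ
  have hvS : v ∈ S := hSclosed.csInf_mem hSne hSbdd
  have hcdfv : cdf Ξ P C v = β := by
    refine le_antisymm ?_ hvS
    by_contra h
    push_neg at h
    obtain ⟨δ, hδ, hδ'⟩ := Metric.continuous_iff.mp hΨ v (cdf Ξ P C v - β) (by linarith)
    have hd : dist (v - δ/2) v < δ := by
      rw [Real.dist_eq]
      rw [abs_of_nonpos (by linarith)]
      linarith
    have habs := hδ' (v - δ/2) hd
    rw [Real.dist_eq, abs_sub_lt_iff] at habs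
    have ht : v - δ/2 ∈ S := by
      simp only [hSdef, Set.mem_setOf_eq]
      linarith [habs.2]
    have hle : v ≤ v - δ/2 := csInf_le hSbdd ht
    linarith
  set A := {ξ | ξ ∈ Ξ ∧ v ≤ C ξ} with hAdef
  have hAm : MeasurableSet A := (hAclosed v).measurableSet
  -- measure of diff sets
  have hdiff : ∀ t : ℝ, (P (Ξ \ {ξ | ξ ∈ Ξ ∧ C ξ ≤ t})).toReal = 1 - cdf Ξ P C t := by
    intro t
    rw [measure_diff (fun ξ hξ => hξ.1) (hBclosed t).measurableSet.nullMeasurableSet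
      (measure_ne_top P _), hPΞ]
    rw [ENNReal.toReal_sub_of_le (hPΞ ▸ measure_mono (fun ξ hξ => hξ.1)) ENNReal.one_ne_top]
    simp [cdf]
  have hlow : 1 - β ≤ (P A).toReal := by
    have hsub : Ξ \ {ξ | ξ ∈ Ξ ∧ C ξ ≤ v} ⊆ A := fun ξ hξ =>
      ⟨hξ.1, le_of_not_ge (fun h => hξ.2 ⟨hξ.1, h⟩)⟩
    have := ENNReal.toReal_mono (measure_ne_top P _) (measure_mono hsub)
    rw [hdiff v, hcdfv] at this
    exact this
  have hup : ∀ ε : ℝ, 0 < ε → (P A).toReal ≤ 1 - cdf Ξ P C (v - ε) := by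
    intro ε hε
    have hsub : A ⊆ Ξ \ {ξ | ξ ∈ Ξ ∧ C ξ ≤ v - ε} := by
      rintro ξ ⟨h1, h2⟩
      exact ⟨h1, fun h => absurd h.2 (by push_neg; linarith)⟩
    have := ENNReal.toReal_mono (measure_ne_top P _) (measure_mono hsub)
    rwa [hdiff (v - ε)] at this
  have hPA : (P A).toReal = 1 - β := by
    refine le_antisymm ?_ hlow
    by_contra h
    push_neg at h
    set c := (P A).toReal - (1 - β) with hc
    obtain ⟨δ, hδ, hδ'⟩ := Metric.continuous_iff.mp hΨ v c (by simp only [hc]; linarith)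
    have hd : dist (v - δ/2) v < δ := by
      rw [Real.dist_eq, abs_of_nonpos (by linarith)]
      linarith
    have habs := hδ' (v - δ/2) hd
    rw [Real.dist_eq, abs_sub_lt_iff] at habs
    have := hup (δ/2) (by linarith)
    rw [hcdfv] at habs
    simp only [hc] at habs
    linarith [habs.2]
  -- the integral bound: v ≤ CVaR
  have hAcompact : IsCompact A := hΞ.of_isClosed_subset (hAclosed v) (fun ξ hξ => hξ.1)
  have hint : IntegrableOn C A P := (hC.mono (fun ξ hξ => hξ.1)).integrableOn_compact hAcompact
  have hconst : IntegrableOn (fun _ => v) A P := integrableOn_const (measure_ne_top P A)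
  have hmono : ∫ ξ in A, v ∂P ≤ ∫ ξ in A, C ξ ∂P :=
    setIntegral_mono_on hconst hint hAm (fun ξ hξ => hξ.2)
  have hconstval : ∫ ξ in A, v ∂P = (1 - β) * v := by
    rw [setIntegral_const, measureReal_def, hPA, smul_eq_mul]
  have h1β : (0 : ℝ) < 1 - β := by linarith
  have hvC : v ≤ CVaR Ξ P C β := by
    have h2 : (1 - β) * v ≤ ∫ ξ in A, C ξ ∂P := hconstval ▸ hmono
    have h3 : (1 / (1 - β)) * ((1 - β) * v) ≤ (1 / (1 - β)) * ∫ ξ in A, C ξ ∂P :=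
      mul_le_mul_of_nonneg_left h2 (by positivity)
    have h4 : (1 / (1 - β)) * ((1 - β) * v) = v := by field_simp
    rw [h4] at h3
    exact h3
  have hsub : {ξ | ξ ∈ Ξ ∧ CT ≤ C ξ} ⊆ A := by
    rintro ξ ⟨h1, h2⟩
    exact ⟨h1, le_trans (le_trans hvC hCVaR) h2⟩
  calc (P {ξ | ξ ∈ Ξ ∧ CT ≤ C ξ}).toReal
      ≤ (P A).toReal := ENNReal.toReal_mono (measure_ne_top P A) (measure_mono hsub)
    _ = 1 - β := hPA
end
end
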